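/- arXiv:2507.18852 — 2 statements merged into one kernel-verified Lean document; each statement's English description precedes it below -/
import Mathlib

section
/- In the base case of the explicit characterization of M: let D be a reduced pipe dream with movable cross tile (i,j) such that max_bump_row_{ij}(D) = h = h_{ij}(D), and let j = c_1 < c_2 < ⋯ < c_m = k = k_{ij}(D) be the columns c such that D(h,c) is a bump tile in Rect_{ij}(D). Then M_{ij}(D) = L_{ij} ∘ L_{i c_2} ∘ ⋯ ∘ L_{i c_{m−1}}(D), and in M_{ij}(D): the only bump in the subrow {h}×[j,k] is (h,j); every tile of [h+1,i−1]×[j,k] is a cross; and the bumps in the subrow {i}×[j,k] are exactly the tiles (i,c_ℓ) for 1 ≤ ℓ ≤ m. -/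
open Finset

/-- A pipe dream is encoded as a tiling of the (1-indexed) grid:
`true` = cross tile (+), `false` = bump tile (•). -/
abbrev PipeDream := ℕ × ℕ → Bool

namespace PipeDream

/-- All cross tiles lie in the staircase {(i,j) | 1 ≤ i, 1 ≤ j, i+j ≤ n+1}. -/
def InStaircase (n : ℕ) (D : PipeDream) : Prop :=
  ∀ i j, D (i, j) = true → 1 ≤ i ∧ 1 ≤ j ∧ i + j ≤ n + 1

/-- Reading word: rows top to bottom, within each row right to left; a cross at
(i,j) contributes the simple transposition s_{i+j-1}. -/
def word (n : ℕ) (D : PipeDream) : List ℕ :=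
  (List.range n).flatMap (fun i =>
    ((List.range n).reverse.filterMap (fun j =>
      if D (i + 1, j + 1) = true then some (i + j + 1) else none)))

/-- The permutation of ℕ realized by the wires of the pipe dream. -/
def perm (n : ℕ) (D : PipeDream) : Equiv.Perm ℕ :=
  (List.map (fun k => Equiv.swap k (k + 1)) (word n D)).prod

def crossCount (n : ℕ) (D : PipeDream) : ℕ := (word n D).length

/-- Number of inversions of w among 1..n (the Coxeter length of w ∈ S_n). -/
def invCount (w : Equiv.Perm ℕ) (n : ℕ) : ℕ :=
  (((Finset.Icc 1 n) ×ˢ (Finset.Icc 1 n)).filter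
    (fun p => p.1 < p.2 ∧ w p.2 < w p.1)).card

/-- Reduced pipe dreams for w ∈ S_n: crosses in the staircase, wires realize w,
and no two wires cross twice (equivalently, #crosses = ℓ(w)). -/
def RPD (n : ℕ) (w : Equiv.Perm ℕ) : Set PipeDream :=
  {D | InStaircase n D ∧ perm n D = w ∧ crossCount n D = invCount w n}

/-- (i,j) is a movable cross tile: a cross with a bump above it in column j. -/
def Movable (D : PipeDream) (i j : ℕ) : Prop :=
  D (i, j) = true ∧ ∃ h, 1 ≤ h ∧ h < i ∧ D (h, j) = false

/-- h_{ij}(D): largest h ∈ [1,i-1] with a bump at (h,j). -/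
def hIdx (D : PipeDream) (i j : ℕ) : ℕ :=
  ((Finset.Ico 1 i).filter (fun h => D (h, j) = false)).sup id

/-- k_{ij}(D): least k ∈ [j+1,n] with a bump at (i,k). -/
def kIdx (n : ℕ) (D : PipeDream) (i j : ℕ) : ℕ :=
  WithTop.untopD 0 (((Finset.Icc (j + 1) n).filter (fun k => D (i, k) = false)).min)

/-- Rect_{ij}(D) = [h,i] × [j,k]. -/
def Rect (n : ℕ) (D : PipeDream) (i j : ℕ) : Finset (ℕ × ℕ) :=
  Finset.Icc (hIdx D i j, j) (i, kIdx n D i j)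

/-- max_bump_row_{ij}(D): largest p ∈ [h,i) whose row contains a bump tile in Rect. -/
def maxBumpRow (n : ℕ) (D : PipeDream) (i j : ℕ) : ℕ :=
  ((Finset.Ico (hIdx D i j) i).filter
    (fun p => ∃ q ∈ Finset.Icc j (kIdx n D i j), D (p, q) = false)).sup id

/-- min_bump_col_{ij}(D): least q ∈ (j,k] whose column contains a bump tile in Rect. -/
def minBumpCol (n : ℕ) (D : PipeDream) (i j : ℕ) : ℕ :=
  WithTop.untopD 0
    (((Finset.Icc (j + 1) (kIdx n D i j)).filter
      (fun q => ∃ p ∈ Finset.Icc (hIdx D i j) i, D (p, q) = false)).min)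

/-- (i,j) is ladder movable: the bumps of Rect_{ij}(D) are exactly the three
corners (h,j), (h,k), (i,k). -/
def LadderMovable (n : ℕ) (D : PipeDream) (i j : ℕ) : Prop :=
  Movable D i j ∧
    ∀ p q, (p, q) ∈ Rect n D i j →
      (D (p, q) = false ↔
        ((p, q) = (hIdx D i j, j) ∨ (p, q) = (hIdx D i j, kIdx n D i j) ∨
          (p, q) = (i, kIdx n D i j)))

/-- Generalized ladder move L_{ij}: swap the cross at (i,j) with the bump at (h,k). -/
def ladderMove (n : ℕ) (D : PipeDream) (i j : ℕ) : PipeDream :=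
  fun st =>
    if st = (i, j) then false
    else if st = (hIdx D i j, kIdx n D i j) then true
    else D st

/-- One covering step of the ladder-move order on RPD(w). -/
def LadderStep (n : ℕ) (D Q : PipeDream) : Prop :=
  ∃ i j, LadderMovable n D i j ∧ Q = ladderMove n D i j

/-- D ≤ Q in the ladder-move order (Q is obtained from D by a possibly empty
sequence of generalized ladder moves). -/
def ladderLE (n : ℕ) (D Q : PipeDream) : Prop :=
  Relation.ReflTransGen (LadderStep n) D Q

/-- One ladder-move step performed at a position northeast of (i,j). -/
def LadderStepNE (n i j : ℕ) (D Q : PipeDream) : Prop :=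
  ∃ p q, p ≤ i ∧ j ≤ q ∧ LadderMovable n D p q ∧ Q = ladderMove n D p q

/-- V_{ij}(D): pipe dreams reachable from D by ladder moves at positions
northeast of (i,j), having a bump at (i,j). -/
def V (n : ℕ) (D : PipeDream) (i j : ℕ) : Set PipeDream :=
  {Q | Relation.ReflTransGen (LadderStepNE n i j) D Q ∧ Q (i, j) = false}

/-- Auxiliary construction of Path_{ij}(D), with fuel (the row number strictly
decreases at each step, so fuel `i` always suffices). -/
def pathAux (n : ℕ) (D : PipeDream) (j : ℕ) : ℕ → ℕ × ℕ → Finset (ℕ × ℕ)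
  | 0, _ => ∅
  | fuel + 1, (p, q) =>
      let p' := maxBumpRow n D p j
      let q' := WithTop.untopD j
        (((Finset.Icc j n).filter (fun t => D (p', t) = false)).min)
      let seg := ((Finset.Icc p' p).image fun r => (r, q)) ∪
        ((Finset.Icc q' q).image fun t => (p', t))
      if q' = j then seg else seg ∪ pathAux n D j fuel (p', q')

/-- Path_{ij}(D): the lattice path from (i, k_{ij}(D)) to (h_{ij}(D), j). -/
def Path (n : ℕ) (D : PipeDream) (i j : ℕ) : Finset (ℕ × ℕ) :=
  pathAux n D j i (i, kIdx n D i j)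

open scoped Classical in
/-- Shape_{ij}(D): tiles of Rect_{ij}(D) weakly below Path_{ij}(D). -/
noncomputable def Shape (n : ℕ) (D : PipeDream) (i j : ℕ) : Finset (ℕ × ℕ) :=
  (Rect n D i j).filter fun st => ∃ p' ≤ st.1, (p', st.2) ∈ Path n D i j

/-- The move operation M_{ij} of Definition 3.4, written with fuel:
(i) if max_bump_row = h and min_bump_col = k, apply the ladder move L_{ij};
(ii) if max_bump_row = a > h, recurse as M_{ij} ∘ M_{aj};
(iii) otherwise recurse as M_{ij} ∘ M_{ib} with b = min_bump_col. -/
def moveAux (n : ℕ) : ℕ → PipeDream → ℕ → ℕ → PipeDream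
  | 0, D, _, _ => D
  | fuel + 1, D, i, j =>
      if maxBumpRow n D i j = hIdx D i j ∧ minBumpCol n D i j = kIdx n D i j then
        ladderMove n D i j
      else if hIdx D i j < maxBumpRow n D i j then
        moveAux n fuel (moveAux n fuel D (maxBumpRow n D i j) j) i j
      else
        moveAux n fuel (moveAux n fuel D i (minBumpCol n D i j)) i j

/-- The move operation M_{ij}.  The fuel `(n+2)^(n+2)` vastly exceeds the depth
of the recursion of Definition 3.4, so `move` agrees with M on all inputs for
which the recursion makes sense. -/
def move (n : ℕ) (D : PipeDream) (i j : ℕ) : PipeDream :=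
  moveAux n ((n + 2) ^ (n + 2)) D i j

/-- (p,q) is northeast of (i,j). -/
def NorthEastOf (p q i j : ℕ) : Prop := p ≤ i ∧ j ≤ q

/-- (i,j) and (p,q) are southwest-incomparable. -/
def SWIncomparable (i j p q : ℕ) : Prop := (i < p ∧ j < q) ∨ (p < i ∧ q < j)

end PipeDream

namespace Stmt17Aux

/-! ### Products of adjacent transpositions -/

def P (l : List ℕ) : Equiv.Perm ℕ := (l.map fun t => Equiv.swap t (t+1)).prod

@[simp] lemma P_nil : P [] = 1 := rfl

lemma P_cons (t : ℕ) (l : List ℕ) : P (t :: l) = Equiv.swap t (t+1) * P l := by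
  simp [P]

lemma P_append (l₁ l₂ : List ℕ) : P (l₁ ++ l₂) = P l₁ * P l₂ := by
  simp [P]

lemma P_flatMap {α : Type*} (l : List α) (g : α → List ℕ) :
    P (l.flatMap g) = (l.map fun a => P (g a)).prod := by
  induction l with
  | nil => simp
  | cons a l ih => simp [List.flatMap_cons, P_append, ih]

lemma swap_commute {a b : ℕ} (h : a + 2 ≤ b) :
    Commute (Equiv.swap a (a+1)) (Equiv.swap b (b+1)) := by
  unfold Commute SemiconjBy
  ext x
  simp only [Equiv.Perm.mul_apply, Equiv.swap_apply_def]
  split_ifs <;> omega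

lemma commute_P {s : ℕ} {l : List ℕ} (h : ∀ t ∈ l, s + 2 ≤ t ∨ t + 2 ≤ s) :
    Commute (Equiv.swap s (s+1)) (P l) := by
  apply Commute.list_prod_right
  intro x hx
  simp only [List.mem_map] at hx
  obtain ⟨t, ht, rfl⟩ := hx
  rcases h t ht with h' | h'
  · exact swap_commute h'
  · exact (swap_commute h').symm

lemma P_commute {l₁ l₂ : List ℕ} (h : ∀ s ∈ l₁, ∀ t ∈ l₂, s + 2 ≤ t ∨ t + 2 ≤ s) :
    Commute (P l₁) (P l₂) := by
  apply Commute.list_prod_left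
  intro x hx
  simp only [List.mem_map] at hx
  obtain ⟨s, hs, rfl⟩ := hx
  exact commute_P (h s hs)

lemma P_apply_fix {l : List ℕ} {v : ℕ} (h : ∀ t ∈ l, t ≠ v ∧ t + 1 ≠ v) : P l v = v := by
  induction l with
  | nil => rfl
  | cons t l ih =>
    rw [P_cons]
    have h1 := h t (List.mem_cons_self)
    have h2 : P l v = v := ih fun u hu => h u (List.mem_cons_of_mem _ hu)
    simp only [Equiv.Perm.mul_apply, h2]
    exact Equiv.swap_apply_of_ne_of_ne (Ne.symm h1.1) (Ne.symm h1.2)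

lemma P_run_up (a b : ℕ) : P ((List.range' a b).reverse) a = a + b := by
  induction b with
  | zero => rfl
  | succ b ih =>
    rw [List.range'_1_concat, List.reverse_append, List.reverse_singleton]
    rw [List.singleton_append, P_cons]
    simp only [Equiv.Perm.mul_apply, ih]
    rw [Equiv.swap_apply_left]
    omega

lemma P_run_down {a b v : ℕ} (h1 : a + 1 ≤ v) (h2 : v ≤ a + b) :
    P ((List.range' a b).reverse) v = v - 1 := by
  induction b with
  | zero => omega
  | succ b ih =>
    rw [List.range'_1_concat, List.reverse_append, List.reverse_singleton,
      List.singleton_append, P_cons]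
    simp only [Equiv.Perm.mul_apply]
    rcases Nat.lt_or_ge v (a + b + 1) with hv | hv
    · rw [ih (by omega)]
      exact Equiv.swap_apply_of_ne_of_ne (by omega) (by omega)
    · have hv' : v = a + b + 1 := by omega
      have : P ((List.range' a b).reverse) v = v := by
        apply P_apply_fix
        intro t ht
        rw [List.mem_reverse, List.mem_range'_1] at ht
        omega
      rw [this, hv']
      rw [show a + b + 1 = (a+b) + 1 from rfl, Equiv.swap_apply_right]
      omega

/-! ### Inversion count bound -/

lemma swap_lt_iff {a x y : ℕ} (hxy : x ≠ y) (h1 : ¬(x = a ∧ y = a+1)) (h2 : ¬(x = a+1 ∧ y = a)) :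
    (Equiv.swap a (a+1) x < Equiv.swap a (a+1) y ↔ x < y) := by
  simp only [Equiv.swap_apply_def]
  split_ifs <;> omega

def invC (w : Equiv.Perm ℕ) (n : ℕ) : ℕ :=
  (((Finset.Icc 1 n) ×ˢ (Finset.Icc 1 n)).filter
    (fun p => p.1 < p.2 ∧ w p.2 < w p.1)).card

lemma invC_swap_mul (w : Equiv.Perm ℕ) (a n : ℕ) :
    invC (Equiv.swap a (a+1) * w) n ≤ invC w n + 1 := by
  classical
  set x : ℕ × ℕ := if w⁻¹ a < w⁻¹ (a+1) then (w⁻¹ a, w⁻¹ (a+1)) else (w⁻¹ (a+1), w⁻¹ a) with hx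
  have hsub : (((Finset.Icc 1 n) ×ˢ (Finset.Icc 1 n)).filter
      (fun p => p.1 < p.2 ∧ (Equiv.swap a (a+1) * w) p.2 < (Equiv.swap a (a+1) * w) p.1)) ⊆
      insert x (((Finset.Icc 1 n) ×ˢ (Finset.Icc 1 n)).filter
      (fun p => p.1 < p.2 ∧ w p.2 < w p.1)) := by
    intro p hp
    obtain ⟨hmem, hlt, hswap⟩ := Finset.mem_filter.mp hp
    simp only [Equiv.Perm.mul_apply] at hswap
    rw [Finset.mem_insert]
    by_cases hc : (w p.2 = a ∧ w p.1 = a + 1) ∨ (w p.2 = a + 1 ∧ w p.1 = a)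
    · left
      rcases hc with ⟨h2, h1⟩ | ⟨h2, h1⟩
      · have e2 : p.2 = w⁻¹ a := by rw [← h2]; simp
        have e1 : p.1 = w⁻¹ (a+1) := by rw [← h1]; simp
        have : ¬ (w⁻¹ a < w⁻¹ (a+1)) := by rw [← e2, ← e1]; omega
        rw [hx, if_neg this, ← e1, ← e2]
      · have e2 : p.2 = w⁻¹ (a+1) := by rw [← h2]; simp
        have e1 : p.1 = w⁻¹ a := by rw [← h1]; simp
        have : w⁻¹ a < w⁻¹ (a+1) := by rw [← e2, ← e1]; omega
        rw [hx, if_pos this, ← e1, ← e2]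
    · right
      rw [Finset.mem_filter]
      refine ⟨hmem, hlt, ?_⟩
      rw [not_or] at hc
      have hne : w p.2 ≠ w p.1 := by
        intro hcon
        exact absurd (w.injective hcon) (by omega)
      rwa [swap_lt_iff hne hc.1 hc.2] at hswap
  calc invC (Equiv.swap a (a+1) * w) n ≤ (insert x (((Finset.Icc 1 n) ×ˢ (Finset.Icc 1 n)).filter
      (fun p => p.1 < p.2 ∧ w p.2 < w p.1))).card := Finset.card_le_card hsub
    _ ≤ invC w n + 1 := Finset.card_insert_le _ _

lemma invC_one (n : ℕ) : invC 1 n = 0 := by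
  rw [invC, Finset.card_eq_zero, Finset.filter_eq_empty_iff]
  intro p _
  simp only [Equiv.Perm.one_apply]
  omega

lemma invC_P_le (l : List ℕ) (n : ℕ) : invC (P l) n ≤ l.length := by
  induction l with
  | nil => simp [invC_one, P_nil]
  | cons t l ih =>
    rw [P_cons]
    calc invC (Equiv.swap t (t+1) * P l) n ≤ invC (P l) n + 1 := invC_swap_mul _ _ _
      _ ≤ l.length + 1 := by omega
      _ = (t :: l).length := by simp

/-! ### Row segments -/

def segc (D : PipeDream) (r a b : ℕ) : List ℕ :=
  (List.range' a b).reverse.filterMap (fun c => if D (r, c+1) = true then some (r + c) else none)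

lemma segc_append (D : PipeDream) (r a b₁ b₂ : ℕ) :
    segc D r a (b₁ + b₂) = segc D r (a + b₁) b₂ ++ segc D r a b₁ := by
  unfold segc
  rw [show b₁ + b₂ = b₂ + b₁ from Nat.add_comm b₁ b₂,
    ← (by rw [Nat.add_comm b₂ b₁]; exact List.range'_append_1 :
      List.range' a b₁ ++ List.range' (a + b₁) b₂ = List.range' a (b₂ + b₁)), List.reverse_append, List.filterMap_append]

lemma segc_congr {D D' : PipeDream} {r a b : ℕ}
    (h : ∀ c, a ≤ c → c < a + b → D (r, c+1) = D' (r, c+1)) :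
    segc D r a b = segc D' r a b := by
  unfold segc
  apply List.filterMap_congr
  intro c hc
  rw [List.mem_reverse, List.mem_range'_1] at hc
  rw [h c hc.1 hc.2]

lemma segc_mem {D : PipeDream} {r a b t : ℕ} (h : t ∈ segc D r a b) :
    ∃ c, a ≤ c ∧ c < a + b ∧ D (r, c+1) = true ∧ t = r + c := by
  unfold segc at h
  rw [List.mem_filterMap] at h
  obtain ⟨c, hc, ht⟩ := h
  rw [List.mem_reverse, List.mem_range'_1] at hc
  by_cases hD : D (r, c+1) = true
  · rw [if_pos hD] at ht
    exact ⟨c, hc.1, hc.2, hD, (Option.some_inj.mp ht).symm⟩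
  · rw [if_neg hD] at ht; cases ht

lemma segc_full {D : PipeDream} {r a b : ℕ}
    (h : ∀ c, a ≤ c → c < a + b → D (r, c+1) = true) :
    segc D r a b = (List.range' (r + a) b).reverse := by
  unfold segc
  have key : ∀ l : List ℕ, (∀ c ∈ l, a ≤ c ∧ c < a + b) →
      l.filterMap (fun c => if D (r, c+1) = true then some (r + c) else none) =
        l.map (fun c => r + c) := by
    intro l
    induction l with
    | nil => intro _; rfl
    | cons c l ih =>
      intro hl
      rw [List.filterMap_cons, List.map_cons,
        if_pos (h c (hl c (List.mem_cons_self)).1 (hl c (List.mem_cons_self)).2),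
        ih (fun u hu => hl u (List.mem_cons_of_mem _ hu))]
  rw [key _ (fun c hc => by rw [List.mem_reverse, List.mem_range'_1] at hc; exact hc)]
  rw [List.map_reverse]
  congr 1
  exact List.map_add_range' (a := r) a b 1

lemma segc_one (D : PipeDream) (r a : ℕ) :
    segc D r a 1 = if D (r, a+1) = true then [r + a] else [] := by
  unfold segc
  rw [List.range'_succ, List.range'_zero]
  simp only [List.reverse_cons, List.reverse_nil, List.nil_append, List.filterMap_cons,
    List.filterMap_nil]
  split_ifs <;> rfl

/-! ### Rearrangement -/

lemma shuffle {G : Type*} [Group G] (u x v a b c : G)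
    (h1 : x * a = a * x) (h2 : v * a = a * v) (h3 : v * b = b * v) :
    u * x * v * (a * b * c) = u * a * (x * b) * (v * c) := by
  have h1' : ∀ t, x * (a * t) = a * (x * t) := fun t => by rw [← mul_assoc, h1, mul_assoc]
  have h2' : ∀ t, v * (a * t) = a * (v * t) := fun t => by rw [← mul_assoc, h2, mul_assoc]
  have h3' : ∀ t, v * (b * t) = b * (v * t) := fun t => by rw [← mul_assoc, h3, mul_assoc]
  simp only [mul_assoc]
  rw [h2' (b * c), h1' (v * (b * c)), h3' c]

lemma P_flat_triple (rows : List ℕ) (U X V : ℕ → List ℕ)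
    (hrel : rows.Pairwise (fun r r' =>
      (∀ t ∈ X r, ∀ u ∈ U r', t + 2 ≤ u) ∧
      (∀ t ∈ V r, ∀ u ∈ U r', t + 2 ≤ u) ∧
      (∀ t ∈ V r, ∀ u ∈ X r', t + 2 ≤ u))) :
    P (rows.flatMap (fun r => U r ++ X r ++ V r)) =
      P (rows.flatMap U) * P (rows.flatMap X) * P (rows.flatMap V) := by
  induction rows with
  | nil => simp
  | cons r rows ih =>
    rw [List.pairwise_cons] at hrel
    obtain ⟨hr, hrest⟩ := hrel
    rw [List.flatMap_cons, List.flatMap_cons, List.flatMap_cons, List.flatMap_cons,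
      P_append, P_append, P_append, P_append, P_append, P_append, ih hrest]
    have cXU : P (X r) * P (rows.flatMap U) = P (rows.flatMap U) * P (X r) := by
      refine (P_commute ?_).eq
      intro s hs t ht
      rw [List.mem_flatMap] at ht
      obtain ⟨r', hr', ht'⟩ := ht
      exact Or.inl ((hr r' hr').1 s hs t ht')
    have cVU : P (V r) * P (rows.flatMap U) = P (rows.flatMap U) * P (V r) := by
      refine (P_commute ?_).eq
      intro s hs t ht
      rw [List.mem_flatMap] at ht
      obtain ⟨r', hr', ht'⟩ := ht
      exact Or.inl ((hr r' hr').2.1 s hs t ht')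
    have cVX : P (V r) * P (rows.flatMap X) = P (rows.flatMap X) * P (V r) := by
      refine (P_commute ?_).eq
      intro s hs t ht
      rw [List.mem_flatMap] at ht
      obtain ⟨r', hr', ht'⟩ := ht
      exact Or.inl ((hr r' hr').2.2 s hs t ht')
    exact shuffle _ _ _ _ _ _ cXU cVU cVX

lemma P_mid (jj kk : ℕ) : ∀ (m s v : ℕ), s + m + jj ≤ v → v ≤ s + m + jj + kk →
    P ((List.range' s m).flatMap (fun r => (List.range' (r + jj) (kk + 1)).reverse)) v = v - m := by
  intro m
  induction m with
  | zero => intro s v h1 h2; simp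
  | succ m ih =>
    intro s v h1 h2
    rw [List.range'_succ, List.flatMap_cons, P_append]
    simp only [Equiv.Perm.mul_apply]
    rw [ih (s+1) v (by omega) (by omega)]
    rw [P_run_down (by omega) (by omega)]
    omega

/-! ### Decomposing the word -/

lemma word_eq (n : ℕ) (D : PipeDream) :
    PipeDream.word n D = (List.range n).flatMap (fun t => segc D (t+1) 0 n) := by
  unfold PipeDream.word segc
  apply List.flatMap_congr
  intro t _
  rw [List.range_eq_range']
  apply List.filterMap_congr
  intro c _
  have h : t + c + 1 = t + 1 + c := by omega
  rw [h]

lemma perm_P (n : ℕ) (D : PipeDream) : PipeDream.perm n D = P (PipeDream.word n D) := rfl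

lemma crossCount_len (n : ℕ) (D : PipeDream) :
    PipeDream.crossCount n D = (PipeDream.word n D).length := rfl

lemma invCount_invC (w : Equiv.Perm ℕ) (n : ℕ) : PipeDream.invCount w n = invC w n := rfl

/-! ### No double crossing: the key reducedness fact -/

lemma no_double (n : ℕ) (D : PipeDream) (h i j k cs : ℕ)
    (hh1 : 1 ≤ h) (hhi : h < i) (hin : i ≤ n) (hj1 : 1 ≤ j) (hjk : j < k) (hkn : k ≤ n)
    (hcs1 : j ≤ cs) (hcs2 : cs < k)
    (hik : D (i, k) = false)
    (hbcs : D (h, cs) = false)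
    (hrowh : ∀ c, cs < c → c < k → D (h, c) = true)
    (hrowi : ∀ c, j ≤ c → c < k → D (i, c) = true)
    (hmid : ∀ p c, h < p → p < i → j ≤ c → c ≤ k → D (p, c) = true)
    (hhk : D (h, k) = true)
    (hlen : PipeDream.crossCount n D = PipeDream.invCount (PipeDream.perm n D) n) :
    False := by
  classical
  set D2 : PipeDream := fun st => if st = ((h, k) : ℕ × ℕ) then false
    else if st = ((i, cs) : ℕ × ℕ) then false else D st with hD2
  have hics : D (i, cs) = true := hrowi cs hcs1 hcs2
  have hD2eq : ∀ p q, (p ≠ h ∨ q ≠ k) → (p ≠ i ∨ q ≠ cs) → D2 (p, q) = D (p, q) := by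
    intro p q h1 h2
    rw [hD2]
    simp only
    rw [if_neg, if_neg]
    · simp only [Prod.mk.injEq, not_and_or]; tauto
    · simp only [Prod.mk.injEq, not_and_or]; tauto
  have hD2hk : D2 (h, k) = false := by simp [hD2]
  have hD2ics : D2 (i, cs) = false := by simp [hD2]
  have hrowcongr : ∀ r, r ≠ h → r ≠ i → ∀ a b, segc D2 r a b = segc D r a b := by
    intro r hr1 hr2 a b
    exact segc_congr (fun c _ _ => hD2eq r (c+1) (Or.inl hr1) (Or.inl hr2))
  -- split the word into row chunks
  have hsplitword : ∀ E : PipeDream, PipeDream.word n E =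
      (List.range' 0 (h-1)).flatMap (fun t => segc E (t+1) 0 n) ++
      ((List.range' (h-1) (i-h+1)).flatMap (fun t => segc E (t+1) 0 n) ++
       (List.range' i (n-i)).flatMap (fun t => segc E (t+1) 0 n)) := by
    intro E
    have e1 := List.range'_append_1 (s := h-1) (m := i-h+1) (n := n-i)
    rw [show h-1+(i-h+1) = i by omega] at e1
    have e2 := List.range'_append_1 (s := 0) (m := h-1) (n := (i-h+1)+(n-i))
    rw [show 0+(h-1) = h-1 by omega] at e2
    have hchunks : List.range' 0 n = List.range' 0 (h-1) ++
        (List.range' (h-1) (i-h+1) ++ List.range' i (n-i)) := by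
      rw [e1, e2]
      congr 1
      omega
    rw [word_eq, List.range_eq_range', hchunks, List.flatMap_append, List.flatMap_append]
  have hpre : (List.range' 0 (h-1)).flatMap (fun t => segc D2 (t+1) 0 n) =
      (List.range' 0 (h-1)).flatMap (fun t => segc D (t+1) 0 n) := by
    apply List.flatMap_congr
    intro t ht
    rw [List.mem_range'_1] at ht
    exact hrowcongr (t+1) (by omega) (by omega) 0 n
  have hpost : (List.range' i (n-i)).flatMap (fun t => segc D2 (t+1) 0 n) =
      (List.range' i (n-i)).flatMap (fun t => segc D (t+1) 0 n) := by
    apply List.flatMap_congr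
    intro t ht
    rw [List.mem_range'_1] at ht
    exact hrowcongr (t+1) (by omega) (by omega) 0 n
  -- split each row into three column chunks
  have hrowsplit : ∀ (E : PipeDream) r, segc E r 0 n =
      segc E r k (n-k) ++ segc E r (j-1) (k-j+1) ++ segc E r 0 (j-1) := by
    intro E r
    have e1 := segc_append E r 0 (j-1) ((k-j+1)+(n-k))
    rw [show 0+(j-1) = j-1 by omega] at e1
    have e2 := segc_append E r (j-1) (k-j+1) (n-k)
    rw [show (j-1)+(k-j+1) = k by omega] at e2
    calc segc E r 0 n = segc E r 0 ((j-1) + ((k-j+1)+(n-k))) := by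
          rw [show (j-1) + ((k-j+1)+(n-k)) = n by omega]
      _ = segc E r (j-1) ((k-j+1)+(n-k)) ++ segc E r 0 (j-1) := e1
      _ = segc E r k (n-k) ++ segc E r (j-1) (k-j+1) ++ segc E r 0 (j-1) := by rw [e2]
  have hmid_triple : ∀ E : PipeDream,
      (List.range' (h-1) (i-h+1)).flatMap (fun t => segc E (t+1) 0 n) =
      (List.range' (h-1) (i-h+1)).flatMap (fun t =>
        segc E (t+1) k (n-k) ++ segc E (t+1) (j-1) (k-j+1) ++ segc E (t+1) 0 (j-1)) :=
    fun E => List.flatMap_congr (fun t _ => hrowsplit E (t+1))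
  have hPmid : ∀ E : PipeDream,
      P ((List.range' (h-1) (i-h+1)).flatMap (fun t => segc E (t+1) 0 n)) =
      P ((List.range' (h-1) (i-h+1)).flatMap (fun t => segc E (t+1) k (n-k))) *
      P ((List.range' (h-1) (i-h+1)).flatMap (fun t => segc E (t+1) (j-1) (k-j+1))) *
      P ((List.range' (h-1) (i-h+1)).flatMap (fun t => segc E (t+1) 0 (j-1))) := by
    intro E
    rw [hmid_triple E]
    apply P_flat_triple
    refine (List.pairwise_lt_range' (s := h-1) (n := i-h+1)).imp ?_
    intro a b hab
    refine ⟨?_, ?_, ?_⟩ <;>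
    · intro x hx u hu
      obtain ⟨c, hc1, hc2, _, rfl⟩ := segc_mem hx
      obtain ⟨c', hc1', hc2', _, rfl⟩ := segc_mem hu
      omega
  have hUeq : (List.range' (h-1) (i-h+1)).flatMap (fun t => segc D2 (t+1) k (n-k)) =
      (List.range' (h-1) (i-h+1)).flatMap (fun t => segc D (t+1) k (n-k)) := by
    apply List.flatMap_congr
    intro t _
    exact segc_congr (fun c hc1 _ => hD2eq (t+1) (c+1) (Or.inr (by omega)) (Or.inr (by omega)))
  have hVeq : (List.range' (h-1) (i-h+1)).flatMap (fun t => segc D2 (t+1) 0 (j-1)) =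
      (List.range' (h-1) (i-h+1)).flatMap (fun t => segc D (t+1) 0 (j-1)) := by
    apply List.flatMap_congr
    intro t _
    exact segc_congr (fun c _ hc2 => hD2eq (t+1) (c+1) (Or.inr (by omega)) (Or.inr (by omega)))
  -- split the middle rows
  have hRsplit : List.range' (h-1) (i-h+1) = (h-1) :: (List.range' h (i-h-1) ++ [i-1]) := by
    rw [show i-h+1 = (i-h-1+1)+1 by omega, List.range'_succ, show h-1+1 = h by omega,
      List.range'_1_concat]
    rw [show h + (i-h-1) = i-1 by omega]
  have hmidflatsplit : ∀ (f : ℕ → List ℕ),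
      (List.range' (h-1) (i-h+1)).flatMap f =
      f (h-1) ++ ((List.range' h (i-h-1)).flatMap f ++ (f (i-1) ++ [])) := by
    intro f
    rw [hRsplit, List.flatMap_cons, List.flatMap_append, List.flatMap_cons, List.flatMap_nil]
  have hXflat : ∀ E : PipeDream,
      (List.range' (h-1) (i-h+1)).flatMap (fun t => segc E (t+1) (j-1) (k-j+1)) =
      segc E h (j-1) (k-j+1) ++
      ((List.range' h (i-h-1)).flatMap (fun t => segc E (t+1) (j-1) (k-j+1)) ++
        (segc E i (j-1) (k-j+1) ++ [])) := by
    intro E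
    rw [hmidflatsplit (fun t => segc E (t+1) (j-1) (k-j+1))]
    rw [show h-1+1 = h by omega, show i-1+1 = i by omega]
  have hmidX2 : (List.range' h (i-h-1)).flatMap (fun t => segc D2 (t+1) (j-1) (k-j+1)) =
      (List.range' h (i-h-1)).flatMap (fun t => segc D (t+1) (j-1) (k-j+1)) := by
    apply List.flatMap_congr
    intro t ht
    rw [List.mem_range'_1] at ht
    exact hrowcongr (t+1) (by omega) (by omega) _ _
  have hmidXrun : (List.range' h (i-h-1)).flatMap (fun t => segc D (t+1) (j-1) (k-j+1)) =
      (List.range' h (i-h-1)).flatMap (fun t => (List.range' (t + j) ((k-j) + 1)).reverse) := by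
    apply List.flatMap_congr
    intro t ht
    rw [List.mem_range'_1] at ht
    rw [segc_full (fun c hc1 hc2 => hmid (t+1) (c+1) (by omega) (by omega) (by omega) (by omega))]
    rw [show (t+1) + (j-1) = t + j by omega]
  -- row h in columns [j, k]
  have hXh_D : segc D h (j-1) (k-j+1) = (h + (k-1)) :: segc D h (j-1) (k-j) := by
    rw [segc_append D h (j-1) (k-j) 1, show (j-1)+(k-j) = k-1 by omega, segc_one,
      show (k-1)+1 = k by omega, if_pos hhk, List.singleton_append]
  have hXh_D2 : segc D2 h (j-1) (k-j+1) = segc D h (j-1) (k-j) := by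
    rw [segc_append D2 h (j-1) (k-j) 1, show (j-1)+(k-j) = k-1 by omega, segc_one,
      show (k-1)+1 = k by omega, if_neg (by rw [hD2hk]; exact Bool.false_ne_true),
      List.nil_append]
    exact segc_congr (fun c hc1 hc2 => hD2eq h (c+1) (Or.inr (by omega)) (Or.inl (by omega)))
  -- row i in columns [j, k]
  have hXi_D : segc D i (j-1) (k-j+1) =
      segc D i cs (k-1-cs) ++ ((i + (cs-1)) :: segc D i (j-1) (cs-j)) := by
    rw [segc_append D i (j-1) (k-j) 1, show (j-1)+(k-j) = k-1 by omega, segc_one,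
      show (k-1)+1 = k by omega, if_neg (by rw [hik]; exact Bool.false_ne_true),
      List.nil_append]
    rw [show k-j = (cs-j+1)+(k-1-cs) by omega, segc_append, show (j-1)+(cs-j+1) = cs by omega]
    congr 1
    rw [segc_append D i (j-1) (cs-j) 1, show (j-1)+(cs-j) = cs-1 by omega, segc_one,
      show (cs-1)+1 = cs by omega, if_pos hics, List.singleton_append]
  have hXi_D2 : segc D2 i (j-1) (k-j+1) =
      segc D i cs (k-1-cs) ++ segc D i (j-1) (cs-j) := by
    have hk2 : D2 (i, k) = false := by
      rw [hD2eq i k (Or.inl (by omega)) (Or.inr (by omega))]; exact hik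
    rw [segc_append D2 i (j-1) (k-j) 1, show (j-1)+(k-j) = k-1 by omega, segc_one,
      show (k-1)+1 = k by omega, if_neg (by rw [hk2]; exact Bool.false_ne_true),
      List.nil_append]
    rw [show k-j = (cs-j+1)+(k-1-cs) by omega, segc_append, show (j-1)+(cs-j+1) = cs by omega]
    congr 1
    · exact segc_congr (fun c hc1 hc2 => hD2eq i (c+1) (Or.inl (by omega)) (Or.inr (by omega)))
    · rw [segc_append D2 i (j-1) (cs-j) 1, show (j-1)+(cs-j) = cs-1 by omega, segc_one,
        show (cs-1)+1 = cs by omega, if_neg (by rw [hD2ics]; exact Bool.false_ne_true),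
        List.nil_append]
      exact segc_congr (fun c hc1 hc2 => hD2eq i (c+1) (Or.inl (by omega)) (Or.inr (by omega)))
  -- evaluation of the key permutation
  have hArun : segc D i cs (k-1-cs) = (List.range' (i + cs) (k-1-cs)).reverse :=
    segc_full (fun c hc1 hc2 => hrowi (c+1) (by omega) (by omega))
  have hPA1 : P (segc D i cs (k-1-cs)) (i + (cs-1)) = i + (cs-1) := by
    rw [hArun]
    apply P_apply_fix
    intro t ht
    rw [List.mem_reverse, List.mem_range'_1] at ht
    omega
  have hPA2 : P (segc D i cs (k-1-cs)) (i + (cs-1) + 1) = i + (k-1) := by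
    rw [hArun, show i + (cs-1) + 1 = i + cs by omega, P_run_up]
    omega
  have hPMd : ∀ v, i + j ≤ v + 1 → v ≤ i + (k-1) →
      P ((List.range' h (i-h-1)).flatMap (fun t => (List.range' (t + j) ((k-j) + 1)).reverse)) v
        = v - (i - h - 1) := by
    intro v h1 h2
    exact P_mid j (k-j) (i-h-1) h v (by omega) (by omega)
  have hYsplit : segc D h (j-1) (k-j) = segc D h cs (k-1-cs) ++ segc D h (j-1) (cs-j+1) := by
    rw [show k-j = (cs-j+1)+(k-1-cs) by omega, segc_append, show (j-1)+(cs-j+1) = cs by omega]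
  have hYhi : segc D h cs (k-1-cs) = (List.range' (h+cs) (k-1-cs)).reverse :=
    segc_full (fun c hc1 hc2 => hrowh (c+1) (by omega) (by omega))
  have hPY1 : P (segc D h (j-1) (k-j)) (h + cs) = h + (k-1) := by
    rw [hYsplit, P_append]
    simp only [Equiv.Perm.mul_apply]
    have hfix : P (segc D h (j-1) (cs-j+1)) (h+cs) = h + cs := by
      apply P_apply_fix
      intro t ht
      obtain ⟨c, hc1, hc2, hcross, rfl⟩ := segc_mem ht
      constructor
      · omega
      · intro heq
        have hceq : c + 1 = cs := by omega
        rw [hceq, hbcs] at hcross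
        cases hcross
    rw [hfix, hYhi, P_run_up]
    omega
  have hPY2 : P (segc D h (j-1) (k-j)) (h + (k-1) + 1) = h + (k-1) + 1 := by
    apply P_apply_fix
    intro t ht
    obtain ⟨c, hc1, hc2, _, rfl⟩ := segc_mem ht
    omega
  set Md : List ℕ := (List.range' h (i-h-1)).flatMap
    (fun t => (List.range' (t + j) ((k-j) + 1)).reverse) with hMd
  set Wp : Equiv.Perm ℕ := P (segc D h (j-1) (k-j)) * (P Md * P (segc D i cs (k-1-cs)))
    with hWp
  have hWp1 : Wp (i + (cs-1)) = h + (k-1) := by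
    rw [hWp]
    simp only [Equiv.Perm.mul_apply]
    rw [hPA1, hPMd _ (by omega) (by omega), show i + (cs-1) - (i-h-1) = h + cs by omega]
    exact hPY1
  have hWp2 : Wp (i + (cs-1) + 1) = h + (k-1) + 1 := by
    rw [hWp]
    simp only [Equiv.Perm.mul_apply]
    rw [hPA2, hPMd _ (by omega) (by omega), show i + (k-1) - (i-h-1) = h + (k-1) + 1 by omega]
    exact hPY2
  have hkey : Equiv.swap (h+(k-1)) (h+(k-1)+1) * Wp =
      Wp * Equiv.swap (i+(cs-1)) (i+(cs-1)+1) := by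
    have hs := Equiv.swap_apply_apply Wp (i+(cs-1)) (i+(cs-1)+1)
    rw [hWp1, hWp2] at hs
    rw [hs, mul_assoc, mul_assoc, inv_mul_cancel, mul_one]
  -- the core identity
  have hXPeq : P ((List.range' (h-1) (i-h+1)).flatMap (fun t => segc D2 (t+1) (j-1) (k-j+1))) =
      P ((List.range' (h-1) (i-h+1)).flatMap (fun t => segc D (t+1) (j-1) (k-j+1))) := by
    rw [hXflat D2, hXflat D, hmidX2, hmidXrun, hXh_D, hXh_D2, hXi_D, hXi_D2,
      List.append_nil, List.append_nil]
    simp only [P_append, P_cons, ← hMd]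
    have hfin : ∀ pb : Equiv.Perm ℕ,
        Equiv.swap (h+(k-1)) (h+(k-1)+1) *
          (P (segc D h (j-1) (k-j)) * (P Md * (P (segc D i cs (k-1-cs)) *
            (Equiv.swap (i+(cs-1)) (i+(cs-1)+1) * pb)))) =
        P (segc D h (j-1) (k-j)) * (P Md * (P (segc D i cs (k-1-cs)) * pb)) := by
      intro pb
      calc Equiv.swap (h+(k-1)) (h+(k-1)+1) *
          (P (segc D h (j-1) (k-j)) * (P Md * (P (segc D i cs (k-1-cs)) *
            (Equiv.swap (i+(cs-1)) (i+(cs-1)+1) * pb))))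
          = (Equiv.swap (h+(k-1)) (h+(k-1)+1) * Wp) *
            (Equiv.swap (i+(cs-1)) (i+(cs-1)+1) * pb) := by
            rw [hWp]; simp only [mul_assoc]
        _ = (Wp * Equiv.swap (i+(cs-1)) (i+(cs-1)+1)) *
            (Equiv.swap (i+(cs-1)) (i+(cs-1)+1) * pb) := by rw [hkey]
        _ = Wp * ((Equiv.swap (i+(cs-1)) (i+(cs-1)+1) *
            Equiv.swap (i+(cs-1)) (i+(cs-1)+1)) * pb) := by simp only [mul_assoc]
        _ = P (segc D h (j-1) (k-j)) * (P Md * (P (segc D i cs (k-1-cs)) * pb)) := by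
            rw [Equiv.swap_mul_self, one_mul, hWp]; simp only [mul_assoc]
    exact (hfin (P (segc D i (j-1) (cs-j)))).symm ▸ rfl
  -- the permutations agree
  have hperm : PipeDream.perm n D2 = PipeDream.perm n D := by
    rw [perm_P, perm_P, hsplitword D2, hsplitword D, hpre, hpost]
    simp only [P_append]
    rw [hPmid D2, hPmid D, hUeq, hVeq, hXPeq]
  -- the cross counts differ by 2
  have hUh : segc D2 h k (n-k) = segc D h k (n-k) :=
    segc_congr (fun c hc1 _ => hD2eq h (c+1) (Or.inr (by omega)) (Or.inl (by omega)))
  have hVh : segc D2 h 0 (j-1) = segc D h 0 (j-1) :=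
    segc_congr (fun c _ hc2 => hD2eq h (c+1) (Or.inr (by omega)) (Or.inl (by omega)))
  have hUi : segc D2 i k (n-k) = segc D i k (n-k) :=
    segc_congr (fun c hc1 _ => hD2eq i (c+1) (Or.inl (by omega)) (Or.inr (by omega)))
  have hVi : segc D2 i 0 (j-1) = segc D i 0 (j-1) :=
    segc_congr (fun c _ hc2 => hD2eq i (c+1) (Or.inl (by omega)) (Or.inr (by omega)))
  have hlh : (segc D h 0 n).length = (segc D2 h 0 n).length + 1 := by
    rw [hrowsplit D h, hrowsplit D2 h, hXh_D, hXh_D2, hUh, hVh]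
    simp only [List.length_append, List.length_cons]
    omega
  have hli : (segc D i 0 n).length = (segc D2 i 0 n).length + 1 := by
    rw [hrowsplit D i, hrowsplit D2 i, hXi_D, hXi_D2, hUi, hVi]
    simp only [List.length_append, List.length_cons]
    omega
  have hinner : (List.range' h (i-h-1)).flatMap (fun t => segc D2 (t+1) 0 n) =
      (List.range' h (i-h-1)).flatMap (fun t => segc D (t+1) 0 n) := by
    apply List.flatMap_congr
    intro t ht
    rw [List.mem_range'_1] at ht
    exact hrowcongr (t+1) (by omega) (by omega) 0 n
  have hcount : PipeDream.crossCount n D = PipeDream.crossCount n D2 + 2 := by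
    rw [crossCount_len, crossCount_len, hsplitword D2, hsplitword D, hpre, hpost,
      hmidflatsplit (fun t => segc D2 (t+1) 0 n), hmidflatsplit (fun t => segc D (t+1) 0 n)]
    simp only [show h-1+1 = h by omega, show i-1+1 = i by omega, hinner]
    simp only [List.length_append, List.append_nil]
    omega
  have hbound : PipeDream.invCount (PipeDream.perm n D2) n ≤ PipeDream.crossCount n D2 := by
    rw [invCount_invC, perm_P, crossCount_len]
    exact invC_P_le _ n
  rw [hperm, ← hlen] at hbound
  omega

/-! ### Index computations -/

lemma bool_false_of_not {b : Bool} (h : ¬ b = true) : b = false := by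
  cases b <;> simp_all

lemma bool_true_of_not {b : Bool} (h : ¬ b = false) : b = true := by
  cases b <;> simp_all

lemma hIdx_eq' (D' : PipeDream) (i c h : ℕ) (h1 : 1 ≤ h) (hhi : h < i)
    (hb : D' (h, c) = false) (hab : ∀ p, h < p → p < i → D' (p, c) = true) :
    PipeDream.hIdx D' i c = h := by
  unfold PipeDream.hIdx
  apply le_antisymm
  · apply Finset.sup_le
    intro p hp
    simp only [id_eq]
    rw [Finset.mem_filter, Finset.mem_Ico] at hp
    obtain ⟨⟨hp1, hp2⟩, hp3⟩ := hp
    by_contra hcon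
    push_neg at hcon
    rw [hab p hcon hp2] at hp3
    simp at hp3
  · refine Finset.le_sup (f := id) ?_
    rw [Finset.mem_filter, Finset.mem_Ico]
    exact ⟨⟨h1, hhi⟩, hb⟩

lemma min_filter_eq {S : Finset ℕ} {m : ℕ} (hm : m ∈ S) (hlb : ∀ b ∈ S, m ≤ b) :
    WithTop.untopD 0 S.min = m := by
  have hmin : S.min = (m : WithTop ℕ) :=
    le_antisymm (Finset.min_le hm) (Finset.le_min (fun b hb => WithTop.coe_le_coe.mpr (hlb b hb)))
  rw [hmin]
  rfl

lemma kIdx_eq' (n : ℕ) (D' : PipeDream) (i c k : ℕ) (hc : c < k) (hkn : k ≤ n)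
    (hb : D' (i, k) = false) (hcr : ∀ q, c < q → q < k → D' (i, q) = true) :
    PipeDream.kIdx n D' i c = k := by
  unfold PipeDream.kIdx
  apply min_filter_eq
  · rw [Finset.mem_filter, Finset.mem_Icc]
    exact ⟨⟨by omega, hkn⟩, hb⟩
  · intro b hb'
    rw [Finset.mem_filter, Finset.mem_Icc] at hb'
    obtain ⟨⟨hb1, hb2⟩, hb3⟩ := hb'
    by_contra hcon
    push_neg at hcon
    rw [hcr b (by omega) (by omega)] at hb3
    simp at hb3

lemma maxBumpRow_eq' (n : ℕ) (D' : PipeDream) (i c h k : ℕ)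
    (pre : PipeDream.hIdx D' i c = h) (pre2 : PipeDream.kIdx n D' i c = k)
    (hhi : h < i) (hck : c ≤ k) (hb : D' (h, c) = false)
    (hmid' : ∀ p q, h < p → p < i → c ≤ q → q ≤ k → D' (p, q) = true) :
    PipeDream.maxBumpRow n D' i c = h := by
  unfold PipeDream.maxBumpRow
  rw [pre, pre2]
  apply le_antisymm
  · apply Finset.sup_le
    intro p hp
    simp only [id_eq]
    rw [Finset.mem_filter, Finset.mem_Ico] at hp
    obtain ⟨⟨hp1, hp2⟩, q, hq, hq2⟩ := hp
    rw [Finset.mem_Icc] at hq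
    by_contra hcon
    push_neg at hcon
    rw [hmid' p q hcon hp2 hq.1 hq.2] at hq2
    simp at hq2
  · refine Finset.le_sup (f := id) ?_
    rw [Finset.mem_filter, Finset.mem_Ico]
    exact ⟨⟨le_refl h, hhi⟩, c, Finset.mem_Icc.mpr ⟨le_refl c, hck⟩, hb⟩

lemma minBumpCol_eq' (n : ℕ) (D' : PipeDream) (i c h k c' p₀ : ℕ)
    (pre : PipeDream.hIdx D' i c = h) (pre2 : PipeDream.kIdx n D' i c = k)
    (hcc' : c < c') (hc'k : c' ≤ k)
    (hp₀ : h ≤ p₀ ∧ p₀ ≤ i ∧ D' (p₀, c') = false)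
    (hno : ∀ q, c < q → q < c' → ∀ p, h ≤ p → p ≤ i → D' (p, q) = true) :
    PipeDream.minBumpCol n D' i c = c' := by
  unfold PipeDream.minBumpCol
  rw [pre, pre2]
  apply min_filter_eq
  · rw [Finset.mem_filter, Finset.mem_Icc]
    exact ⟨⟨by omega, hc'k⟩, p₀, Finset.mem_Icc.mpr ⟨hp₀.1, hp₀.2.1⟩, hp₀.2.2⟩
  · intro b hb'
    rw [Finset.mem_filter, Finset.mem_Icc] at hb'
    obtain ⟨⟨hb1, hb2⟩, p, hp, hp2⟩ := hb'
    rw [Finset.mem_Icc] at hp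
    by_contra hcon
    push_neg at hcon
    rw [hno b (by omega) (by omega) p hp.1 hp.2] at hp2
    simp at hp2

/-! ### The intermediate pipe dreams -/

def EE (D : PipeDream) (h i k c : ℕ) : PipeDream := fun st =>
  if st.1 = i ∧ c ≤ st.2 ∧ st.2 < k ∧ D (h, st.2) = false then false
  else if st.1 = h ∧ c < st.2 ∧ st.2 ≤ k ∧ D (h, st.2) = false then true
  else D st

lemma EE_k (D : PipeDream) (h i k : ℕ) : EE D h i k k = D := by
  funext st
  simp only [EE]
  split_ifs with h1 h2
  · obtain ⟨-, a, b, -⟩ := h1; omega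
  · obtain ⟨-, a, b, -⟩ := h2; omega
  · rfl

/-- Configuration of a movable cross with `maxBumpRow = hIdx`. -/
structure Cfg (n : ℕ) (D : PipeDream) (i j h k : ℕ) : Prop where
  hh1 : 1 ≤ h
  hhi : h < i
  hj1 : 1 ≤ j
  hjk : j < k
  hkn : k ≤ n
  hij : D (i, j) = true
  hbj : D (h, j) = false
  hik : D (i, k) = false
  hbk : D (h, k) = false
  hrowi : ∀ c, j < c → c < k → D (i, c) = true
  hmid : ∀ p c, h < p → p < i → j ≤ c → c ≤ k → D (p, c) = true

lemma Cfg.rowi' {n : ℕ} {D : PipeDream} {i j h k : ℕ} (cfg : Cfg n D i j h k) :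
    ∀ c, j ≤ c → c < k → D (i, c) = true := by
  intro c hc1 hc2
  rcases eq_or_lt_of_le hc1 with rfl | hlt
  · exact cfg.hij
  · exact cfg.hrowi c hlt hc2

lemma EE_eval (D : PipeDream) (h i k c p q : ℕ) : EE D h i k c (p, q) =
    if p = i ∧ c ≤ q ∧ q < k ∧ D (h, q) = false then false
    else if p = h ∧ c < q ∧ q ≤ k ∧ D (h, q) = false then true
    else D (p, q) := rfl

section Step

variable {n : ℕ} {D : PipeDream} {i j h k c c' : ℕ} (cfg : Cfg n D i j h k)
  (hc1 : j ≤ c) (hck : c < k) (hbc : D (h, c) = false)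
  (hcc' : c < c') (hc'k : c' ≤ k) (hbc' : D (h, c') = false)
  (hmin : ∀ q, c < q → q < c' → D (h, q) = true)

include cfg hc1 hck hbc hcc' hc'k hbc' hmin

set_option linter.unusedSectionVars false

lemma EE_at_hc : EE D h i k c' (h, c) = false := by
  have hhi := cfg.hhi
  rw [EE_eval]
  rw [if_neg (fun hcon => absurd hcon.1 (by omega)),
    if_neg (fun hcon => absurd hcon.2.1 (by omega))]
  exact hbc

lemma EE_at_ic' : EE D h i k c' (i, c') = false := by
  have hhi := cfg.hhi
  rcases eq_or_lt_of_le hc'k with rfl | hlt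
  · rw [EE_eval]
    rw [if_neg (fun hcon => absurd hcon.2.2.1 (by omega)),
      if_neg (fun hcon => absurd hcon.1 (by omega))]
    exact cfg.hik
  · rw [EE_eval]
    rw [if_pos ⟨rfl, le_refl c', hlt, hbc'⟩]

lemma EE_mid_cross : ∀ p q, h < p → p < i → c ≤ q → q ≤ k → EE D h i k c' (p, q) = true := by
  intro p q hp1 hp2 hq1 hq2
  rw [EE_eval]
  rw [if_neg (fun hcon => absurd hcon.1 (by omega)),
    if_neg (fun hcon => absurd hcon.1 (by omega))]
  exact cfg.hmid p q hp1 hp2 (by omega) hq2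

lemma step_hIdx : PipeDream.hIdx (EE D h i k c') i c = h :=
  hIdx_eq' _ i c h cfg.hh1 cfg.hhi (EE_at_hc cfg hc1 hck hbc hcc' hc'k hbc' hmin)
    (fun p hp1 hp2 => EE_mid_cross cfg hc1 hck hbc hcc' hc'k hbc' hmin p c hp1 hp2
      (le_refl c) (le_of_lt hck))

lemma step_kIdx : PipeDream.kIdx n (EE D h i k c') i c = c' := by
  have hhi := cfg.hhi
  apply kIdx_eq' n _ i c c' hcc' (le_trans hc'k cfg.hkn)
    (EE_at_ic' cfg hc1 hck hbc hcc' hc'k hbc' hmin)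
  intro q hq1 hq2
  rw [EE_eval]
  rw [if_neg (fun hcon => absurd hcon.2.1 (by omega)),
    if_neg (fun hcon => absurd hcon.1 (by omega))]
  exact cfg.rowi' q (by omega) (by omega)

lemma step_max : PipeDream.maxBumpRow n (EE D h i k c') i c = h :=
  maxBumpRow_eq' n _ i c h c' (step_hIdx cfg hc1 hck hbc hcc' hc'k hbc' hmin)
    (step_kIdx cfg hc1 hck hbc hcc' hc'k hbc' hmin) cfg.hhi (le_of_lt hcc')
    (EE_at_hc cfg hc1 hck hbc hcc' hc'k hbc' hmin)
    (fun p q hp1 hp2 hq1 hq2 =>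
      EE_mid_cross cfg hc1 hck hbc hcc' hc'k hbc' hmin p q hp1 hp2 hq1 (by omega))

lemma step_min : PipeDream.minBumpCol n (EE D h i k c') i c = c' := by
  have hhi := cfg.hhi
  apply minBumpCol_eq' n _ i c h c' c' i (step_hIdx cfg hc1 hck hbc hcc' hc'k hbc' hmin)
    (step_kIdx cfg hc1 hck hbc hcc' hc'k hbc' hmin) hcc' (le_refl c')
    ⟨le_of_lt cfg.hhi, le_refl i, EE_at_ic' cfg hc1 hck hbc hcc' hc'k hbc' hmin⟩
  intro q hq1 hq2 p hp1 hp2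
  rcases eq_or_lt_of_le hp2 with rfl | hpi
  · rw [EE_eval]
    rw [if_neg (fun hcon => absurd hcon.2.1 (by omega)),
      if_neg (fun hcon => absurd hcon.1 (by omega))]
    exact cfg.rowi' q (by omega) (by omega)
  · rcases eq_or_lt_of_le hp1 with rfl | hph
    · rw [EE_eval]
      rw [if_neg (fun hcon => absurd hcon.1 (by omega)),
        if_neg (fun hcon => absurd hcon.2.1 (by omega))]
      exact hmin q hq1 hq2
    · exact EE_mid_cross cfg hc1 hck hbc hcc' hc'k hbc' hmin p q hph hpi (by omega) (by omega)

lemma step_ladder : PipeDream.ladderMove n (EE D h i k c') i c = EE D h i k c := by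
  have hhi := cfg.hhi
  funext st
  obtain ⟨p, q⟩ := st
  unfold PipeDream.ladderMove
  rw [step_hIdx cfg hc1 hck hbc hcc' hc'k hbc' hmin,
    step_kIdx cfg hc1 hck hbc hcc' hc'k hbc' hmin]
  by_cases h1 : ((p, q) : ℕ × ℕ) = (i, c)
  · rw [if_pos h1, h1]
    rw [EE_eval, if_pos ⟨rfl, le_refl c, hck, hbc⟩]
  · rw [if_neg h1]
    by_cases h2 : ((p, q) : ℕ × ℕ) = (h, c')
    · rw [if_pos h2, h2]
      rw [EE_eval]
      rw [if_neg (fun hcon => absurd hcon.1 (by omega)),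
        if_pos ⟨rfl, hcc', hc'k, hbc'⟩]
    · rw [if_neg h2]
      rw [Prod.mk.injEq, not_and_or] at h1 h2
      rw [EE_eval, EE_eval]
      by_cases hp : p = i
      · have hq : q ≠ c := by
          rcases h1 with h1 | h1
          · exact absurd hp h1
          · exact h1
        by_cases hcond : c ≤ q ∧ q < k ∧ D (h, q) = false
        · obtain ⟨ha, hb2, hc3⟩ := hcond
          have hq' : c' ≤ q := by
            by_contra hcon
            push_neg at hcon
            have hqt := hmin q (by omega) (by omega)
            rw [hqt] at hc3
            simp at hc3
          rw [if_pos ⟨hp, hq', hb2, hc3⟩, if_pos ⟨hp, ha, hb2, hc3⟩]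
        · rw [if_neg (fun hcon => hcond ⟨le_trans (le_of_lt hcc') hcon.2.1, hcon.2.2.1, hcon.2.2.2⟩),
            if_neg (fun hcon => absurd hcon.1 (by omega)),
            if_neg (fun hcon => hcond ⟨hcon.2.1, hcon.2.2.1, hcon.2.2.2⟩),
            if_neg (fun hcon => absurd hcon.1 (by omega))]
      · by_cases hph : p = h
        · have hq : q ≠ c' := by
            rcases h2 with h2 | h2
            · exact absurd hph h2
            · exact h2
          rw [if_neg (fun hcon => absurd hcon.1 hp)]
          by_cases hcond : c' < q ∧ q ≤ k ∧ D (h, q) = false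
          · obtain ⟨ha, hb2, hc3⟩ := hcond
            rw [if_pos ⟨hph, ha, hb2, hc3⟩, if_neg (fun hcon => absurd hcon.1 hp),
              if_pos ⟨hph, by omega, hb2, hc3⟩]
          · have hnB : ¬(p = h ∧ c < q ∧ q ≤ k ∧ D (h, q) = false) := by
              intro hcon
              obtain ⟨-, ha, hb2, hc3⟩ := hcon
              have hqlt : q < c' := by
                have hnlt : ¬ c' < q := fun hlt => hcond ⟨hlt, hb2, hc3⟩
                omega
              have hqt := hmin q ha hqlt
              rw [hqt] at hc3
              simp at hc3
            rw [if_neg (fun hcon => hcond ⟨hcon.2.1, hcon.2.2.1, hcon.2.2.2⟩),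
              if_neg (fun hcon => absurd hcon.1 hp), if_neg hnB]
        · rw [if_neg (fun hcon => absurd hcon.1 hp), if_neg (fun hcon => absurd hcon.1 hph),
            if_neg (fun hcon => absurd hcon.1 hp), if_neg (fun hcon => absurd hcon.1 hph)]

end Step

/-! ### The recursion computes EE -/

lemma moveAux_eq {n : ℕ} {D : PipeDream} {i j h k : ℕ} (cfg : Cfg n D i j h k) :
    ∀ (N : ℕ) (c : ℕ), j ≤ c → c < k → D (h, c) = false →
      (((Finset.Ioc c k).filter (fun q => D (h, q) = false)).card ≤ N) →
      ∀ F, N ≤ F → PipeDream.moveAux n F D i c = EE D h i k c := by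
  intro N
  induction N with
  | zero =>
    intro c hc1 hc2 hbc hcard F hF
    exfalso
    have hkmem : k ∈ (Finset.Ioc c k).filter (fun q => D (h, q) = false) := by
      rw [Finset.mem_filter, Finset.mem_Ioc]
      exact ⟨⟨hc2, le_refl k⟩, cfg.hbk⟩
    have := Finset.card_pos.mpr ⟨k, hkmem⟩
    omega
  | succ N ih =>
    intro c hc1 hc2 hbc hcard F hF
    have hkmem : k ∈ (Finset.Ioc c k).filter (fun q => D (h, q) = false) := by
      rw [Finset.mem_filter, Finset.mem_Ioc]
      exact ⟨⟨hc2, le_refl k⟩, cfg.hbk⟩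
    have hSne : ((Finset.Ioc c k).filter (fun q => D (h, q) = false)).Nonempty := ⟨k, hkmem⟩
    set c' := ((Finset.Ioc c k).filter (fun q => D (h, q) = false)).min' hSne with hc'def
    have hc'S := Finset.min'_mem _ hSne
    rw [← hc'def, Finset.mem_filter, Finset.mem_Ioc] at hc'S
    obtain ⟨⟨hcc', hc'k⟩, hbc'⟩ := hc'S
    have hminc' : ∀ q, c < q → q < c' → D (h, q) = true := by
      intro q hq1 hq2
      by_contra hcon
      have hqS : q ∈ (Finset.Ioc c k).filter (fun q => D (h, q) = false) := by
        rw [Finset.mem_filter, Finset.mem_Ioc]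
        exact ⟨⟨hq1, by omega⟩, bool_false_of_not hcon⟩
      have := Finset.min'_le _ q hqS
      omega
    have hIc : PipeDream.hIdx D i c = h :=
      hIdx_eq' D i c h cfg.hh1 cfg.hhi hbc
        (fun p hp1 hp2 => cfg.hmid p c hp1 hp2 hc1 (by omega))
    have hKc : PipeDream.kIdx n D i c = k :=
      kIdx_eq' n D i c k hc2 cfg.hkn cfg.hik (fun q hq1 hq2 => cfg.rowi' q (by omega) hq2)
    have hMc : PipeDream.maxBumpRow n D i c = h :=
      maxBumpRow_eq' n D i c h k hIc hKc cfg.hhi (by omega) hbc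
        (fun p q hp1 hp2 hq1 hq2 => cfg.hmid p q hp1 hp2 (by omega) hq2)
    have hmc : PipeDream.minBumpCol n D i c = c' := by
      apply minBumpCol_eq' n D i c h k c' h hIc hKc hcc' hc'k
        ⟨le_refl h, le_of_lt cfg.hhi, hbc'⟩
      intro q hq1 hq2 p hp1 hp2
      rcases eq_or_lt_of_le hp2 with rfl | hpi
      · exact cfg.rowi' q (by omega) (by omega)
      · rcases eq_or_lt_of_le hp1 with rfl | hph
        · exact hminc' q hq1 hq2
        · exact cfg.hmid p q hph hpi (by omega) (by omega)
    obtain ⟨F', rfl⟩ : ∃ F', F = F' + 1 := ⟨F - 1, by omega⟩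
    by_cases hck' : c' = k
    · have hmin' : ∀ q, c < q → q < k → D (h, q) = true :=
        fun q hq1 hq2 => hminc' q hq1 (by omega)
      have hstep := step_ladder cfg hc1 hc2 hbc (show c < k by omega) (le_refl k)
        cfg.hbk hmin'
      rw [EE_k] at hstep
      simp only [PipeDream.moveAux]
      rw [hIc, hKc, hMc, hmc, if_pos ⟨rfl, hck'⟩]
      exact hstep
    · have hc'k2 : c' < k := lt_of_le_of_ne hc'k hck'
      have hcard' : ((Finset.Ioc c' k).filter (fun q => D (h, q) = false)).card ≤ N := by
        have hsub : (Finset.Ioc c' k).filter (fun q => D (h, q) = false) ⊆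
            (Finset.Ioc c k).filter (fun q => D (h, q) = false) := by
          intro q hq
          rw [Finset.mem_filter, Finset.mem_Ioc] at hq ⊢
          exact ⟨⟨by omega, hq.1.2⟩, hq.2⟩
        have hc'notin : c' ∉ (Finset.Ioc c' k).filter (fun q => D (h, q) = false) := by
          rw [Finset.mem_filter, Finset.mem_Ioc]
          intro hcon
          omega
        have hc'in : c' ∈ (Finset.Ioc c k).filter (fun q => D (h, q) = false) := by
          rw [Finset.mem_filter, Finset.mem_Ioc]
          exact ⟨⟨hcc', hc'k⟩, hbc'⟩
        have := Finset.card_lt_card ((Finset.ssubset_iff_of_subset hsub).mpr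
          ⟨c', hc'in, hc'notin⟩)
        omega
    -- N ≥ 1 since both c' and k are in the bump set of c
      have hN1 : 1 ≤ N := by
        have hsub2 : ({c', k} : Finset ℕ) ⊆ (Finset.Ioc c k).filter (fun q => D (h, q) = false) := by
          intro q hq
          rw [Finset.mem_insert, Finset.mem_singleton] at hq
          rw [Finset.mem_filter, Finset.mem_Ioc]
          rcases hq with rfl | rfl
          · exact ⟨⟨hcc', hc'k⟩, hbc'⟩
          · exact ⟨⟨hc2, le_refl _⟩, cfg.hbk⟩
        have hcard2 : ({c', k} : Finset ℕ).card = 2 := by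
          rw [Finset.card_insert_of_notMem (by simp [hck']), Finset.card_singleton]
        have := Finset.card_le_card hsub2
        omega
      simp only [PipeDream.moveAux]
      rw [hIc, hKc, hMc, hmc, if_neg (fun hcon => hck' hcon.2), if_neg (by omega)]
      rw [ih c' (by omega) hc'k2 hbc' hcard' F' (by omega)]
      obtain ⟨F'', rfl⟩ : ∃ F'', F' = F'' + 1 := ⟨F' - 1, by omega⟩
      simp only [PipeDream.moveAux]
      rw [step_hIdx cfg hc1 hc2 hbc hcc' hc'k hbc' hminc',
        step_kIdx cfg hc1 hc2 hbc hcc' hc'k hbc' hminc',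
        step_max cfg hc1 hc2 hbc hcc' hc'k hbc' hminc',
        step_min cfg hc1 hc2 hbc hcc' hc'k hbc' hminc',
        if_pos ⟨rfl, rfl⟩]
      exact step_ladder cfg hc1 hc2 hbc hcc' hc'k hbc' hminc'

/-! ### The ladder-move fold computes EE -/

lemma fold_eq {n : ℕ} {D : PipeDream} {i j h k : ℕ} (cfg : Cfg n D i j h k) :
    ∀ (N : ℕ) (c : ℕ), j ≤ c → c ≤ k → D (h, c) = false →
      (((Finset.Icc c k).filter (fun q => D (h, q) = false)).card ≤ N) →
      ((((Finset.Icc c k).filter (fun q => D (h, q) = false)).sort (· ≤ ·)).dropLast.reverse).foldl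
        (fun E q => PipeDream.ladderMove n E i q) D = EE D h i k c := by
  intro N
  induction N with
  | zero =>
    intro c hc1 hc2 hbc hcard
    exfalso
    have hkmem : k ∈ (Finset.Icc c k).filter (fun q => D (h, q) = false) := by
      rw [Finset.mem_filter, Finset.mem_Icc]
      exact ⟨⟨hc2, le_refl k⟩, cfg.hbk⟩
    have := Finset.card_pos.mpr ⟨k, hkmem⟩
    omega
  | succ N ih =>
    intro c hc1 hc2 hbc hcard
    by_cases hck : c = k
    · subst hck
      have hone : (Finset.Icc c c).filter (fun q => D (h, q) = false) = {c} := by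
        rw [Finset.Icc_self, Finset.filter_singleton, if_pos hbc]
      rw [hone, Finset.sort_singleton]
      simp only [List.dropLast_singleton, List.reverse_nil, List.foldl_nil]
      exact (EE_k D h i c).symm
    · have hck2 : c < k := lt_of_le_of_ne hc2 hck
      have hkmem : k ∈ (Finset.Ioc c k).filter (fun q => D (h, q) = false) := by
        rw [Finset.mem_filter, Finset.mem_Ioc]
        exact ⟨⟨hck2, le_refl k⟩, cfg.hbk⟩
      have hSne : ((Finset.Ioc c k).filter (fun q => D (h, q) = false)).Nonempty := ⟨k, hkmem⟩
      set c' := ((Finset.Ioc c k).filter (fun q => D (h, q) = false)).min' hSne with hc'def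
      have hc'S := Finset.min'_mem _ hSne
      rw [← hc'def, Finset.mem_filter, Finset.mem_Ioc] at hc'S
      obtain ⟨⟨hcc', hc'k⟩, hbc'⟩ := hc'S
      have hminc' : ∀ q, c < q → q < c' → D (h, q) = true := by
        intro q hq1 hq2
        by_contra hcon
        have hqS : q ∈ (Finset.Ioc c k).filter (fun q => D (h, q) = false) := by
          rw [Finset.mem_filter, Finset.mem_Ioc]
          exact ⟨⟨hq1, by omega⟩, bool_false_of_not hcon⟩
        have := Finset.min'_le _ q hqS
        omega
      have hsplit : (Finset.Icc c k).filter (fun q => D (h, q) = false) =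
          insert c ((Finset.Icc c' k).filter (fun q => D (h, q) = false)) := by
        ext q
        simp only [Finset.mem_insert, Finset.mem_filter, Finset.mem_Icc]
        constructor
        · rintro ⟨⟨hq1, hq2⟩, hq3⟩
          rcases eq_or_lt_of_le hq1 with rfl | hlt
          · left; rfl
          · right
            refine ⟨⟨?_, hq2⟩, hq3⟩
            by_contra hcon
            push_neg at hcon
            rw [hminc' q hlt (by omega)] at hq3
            simp at hq3
        · rintro (rfl | ⟨⟨hq1, hq2⟩, hq3⟩)
          · exact ⟨⟨le_refl q, hc2⟩, hbc⟩
          · exact ⟨⟨by omega, hq2⟩, hq3⟩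
      have hcard' : ((Finset.Icc c' k).filter (fun q => D (h, q) = false)).card ≤ N := by
        have hcnotin : c ∉ (Finset.Icc c' k).filter (fun q => D (h, q) = false) := by
          rw [Finset.mem_filter, Finset.mem_Icc]
          intro hcon
          omega
        rw [hsplit, Finset.card_insert_of_notMem hcnotin] at hcard
        omega
      rw [hsplit, Finset.sort_insert]
      rotate_left
      · intro b hb
        rw [Finset.mem_filter, Finset.mem_Icc] at hb
        omega
      · rw [Finset.mem_filter, Finset.mem_Icc]
        intro hcon
        omega
      have hsortne : ((Finset.Icc c' k).filter (fun q => D (h, q) = false)).sort (· ≤ ·) ≠ [] := by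
        intro hcon
        have hkm : k ∈ (Finset.Icc c' k).filter (fun q => D (h, q) = false) := by
          rw [Finset.mem_filter, Finset.mem_Icc]
          exact ⟨⟨hc'k, le_refl k⟩, cfg.hbk⟩
        have := (Finset.mem_sort (α := ℕ) (· ≤ ·)).mpr hkm
        rw [hcon] at this
        exact absurd this List.not_mem_nil
      rw [List.dropLast_cons_of_ne_nil hsortne, List.reverse_cons, List.foldl_append,
        List.foldl_cons, List.foldl_nil]
      rw [ih c' (by omega) hc'k hbc' hcard']
      exact step_ladder cfg hc1 hck2 hbc hcc' hc'k hbc' hminc'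

end Stmt17Aux


open PipeDream in
/-- base case of the explicit characterization of M.  With
max_bump_row = h and bump columns j = c₁ < ⋯ < c_m = k of row h in Rect,
M_{ij}(D) = L_{ij} ∘ L_{i c₂} ∘ ⋯ ∘ L_{i c_{m-1}}(D), and in M_{ij}(D) the only
bump of {h}×[j,k] is (h,j), all of [h+1,i-1]×[j,k] are crosses, and the bumps
of {i}×[j,k] are exactly the (i,cₗ). -/
theorem stmt17 (n : ℕ) (w : Equiv.Perm ℕ) (D : PipeDream) (hD : D ∈ RPD n w)
    (i j : ℕ) (hmov : Movable D i j)
    (hbase : maxBumpRow n D i j = hIdx D i j) :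
    move n D i j =
      (((((Finset.Icc j (kIdx n D i j)).filter
          (fun c => D (hIdx D i j, c) = false)).sort (· ≤ ·)).dropLast.reverse).foldl
        (fun E c => ladderMove n E i c) D) ∧
    (∀ c, j ≤ c → c ≤ kIdx n D i j →
      (move n D i j (hIdx D i j, c) = false ↔ c = j)) ∧
    (∀ s c, hIdx D i j < s → s < i → j ≤ c → c ≤ kIdx n D i j →
      move n D i j (s, c) = true) ∧
    (∀ c, j ≤ c → c ≤ kIdx n D i j →
      (move n D i j (i, c) = false ↔ D (hIdx D i j, c) = false)) := by
  classical
  obtain ⟨hstair, hpermw, hcount⟩ := hD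
  obtain ⟨hij, h₀, hh₀1, hh₀i, hbh₀⟩ := hmov
  obtain ⟨hi1, hj1, hijn⟩ := hstair i j hij
  have hi2 : 2 ≤ i := by omega
  set h := PipeDream.hIdx D i j with hh
  set k := PipeDream.kIdx n D i j with hk
  -- facts about h
  have hShne : ((Finset.Ico 1 i).filter (fun p => D (p, j) = false)).Nonempty :=
    ⟨h₀, by rw [Finset.mem_filter, Finset.mem_Ico]; exact ⟨⟨hh₀1, hh₀i⟩, hbh₀⟩⟩
  have hSh : h ∈ (Finset.Ico 1 i).filter (fun p => D (p, j) = false) := by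
    obtain ⟨b, hb, hbe⟩ := Finset.exists_mem_eq_sup _ hShne id
    rw [hh]
    unfold PipeDream.hIdx
    rw [hbe]
    exact hb
  rw [Finset.mem_filter, Finset.mem_Ico] at hSh
  obtain ⟨⟨hh1, hhi⟩, hbj⟩ := hSh
  -- facts about k
  have hSk0 : (n+2-i) ∈ (Finset.Icc (j+1) n).filter (fun q => D (i, q) = false) := by
    rw [Finset.mem_filter, Finset.mem_Icc]
    refine ⟨⟨by omega, by omega⟩, ?_⟩
    by_contra hcon
    have hcross : D (i, n+2-i) = true := Stmt17Aux.bool_true_of_not hcon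
    have := hstair i (n+2-i) hcross
    omega
  have hSkne : ((Finset.Icc (j+1) n).filter (fun q => D (i, q) = false)).Nonempty := ⟨_, hSk0⟩
  have hkval : k = ((Finset.Icc (j+1) n).filter (fun q => D (i, q) = false)).min' hSkne := by
    rw [hk]
    unfold PipeDream.kIdx
    rw [← Finset.coe_min' hSkne]
    rfl
  have hkmem : k ∈ (Finset.Icc (j+1) n).filter (fun q => D (i, q) = false) := by
    rw [hkval]; exact Finset.min'_mem _ hSkne
  rw [Finset.mem_filter, Finset.mem_Icc] at hkmem
  obtain ⟨⟨hjk1, hkn⟩, hik⟩ := hkmem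
  have hkmin : ∀ q, j < q → q < k → D (i, q) = true := by
    intro q hq1 hq2
    by_contra hcon
    have hqS : q ∈ (Finset.Icc (j+1) n).filter (fun q => D (i, q) = false) := by
      rw [Finset.mem_filter, Finset.mem_Icc]
      exact ⟨⟨by omega, by omega⟩, Stmt17Aux.bool_false_of_not hcon⟩
    have := Finset.min'_le _ q hqS
    rw [← hkval] at this
    omega
  -- middle rows are all crosses (from hbase)
  have hmid : ∀ p c, h < p → p < i → j ≤ c → c ≤ k → D (p, c) = true := by
    intro p c hp1 hp2 hc1 hc2
    by_contra hcon
    have hpfil : p ∈ (Finset.Ico (PipeDream.hIdx D i j) i).filter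
        (fun p => ∃ q ∈ Finset.Icc j (PipeDream.kIdx n D i j), D (p, q) = false) := by
      rw [Finset.mem_filter, Finset.mem_Ico]
      refine ⟨⟨by rw [← hh]; omega, hp2⟩, c, ?_, Stmt17Aux.bool_false_of_not hcon⟩
      rw [Finset.mem_Icc, ← hk]
      exact ⟨hc1, hc2⟩
    have hple : p ≤ PipeDream.maxBumpRow n D i j := by
      unfold PipeDream.maxBumpRow
      exact Finset.le_sup (f := id) hpfil
    rw [hbase] at hple
    omega
  -- the reducedness fact: D (h, k) is a bump
  have hbk : D (h, k) = false := by
    by_contra hcon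
    have hhk : D (h, k) = true := Stmt17Aux.bool_true_of_not hcon
    have hTne : ((Finset.Icc j (k-1)).filter (fun q => D (h, q) = false)).Nonempty :=
      ⟨j, by rw [Finset.mem_filter, Finset.mem_Icc]; exact ⟨⟨le_refl j, by omega⟩, hbj⟩⟩
    set cs := ((Finset.Icc j (k-1)).filter (fun q => D (h, q) = false)).max' hTne with hcsdef
    have hcsT := Finset.max'_mem _ hTne
    rw [← hcsdef, Finset.mem_filter, Finset.mem_Icc] at hcsT
    obtain ⟨⟨hcs1, hcs2⟩, hbcs⟩ := hcsT
    have hrowh : ∀ c, cs < c → c < k → D (h, c) = true := by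
      intro c hc1 hc2
      by_contra hcon2
      have hcT : c ∈ (Finset.Icc j (k-1)).filter (fun q => D (h, q) = false) := by
        rw [Finset.mem_filter, Finset.mem_Icc]
        exact ⟨⟨by omega, by omega⟩, Stmt17Aux.bool_false_of_not hcon2⟩
      have := Finset.le_max' _ c hcT
      rw [← hcsdef] at this
      omega
    exact Stmt17Aux.no_double n D h i j k cs hh1 hhi (by omega) hj1 (by omega) hkn hcs1
      (by omega) hik hbcs hrowh
      (fun c hc1 hc2 => by
        rcases eq_or_lt_of_le hc1 with rfl | hlt
        · exact hij
        · exact hkmin c hlt hc2)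
      hmid hhk (by rw [hpermw]; exact hcount)
  -- the configuration
  have cfg : Stmt17Aux.Cfg n D i j h k :=
    ⟨hh1, hhi, hj1, by omega, hkn, hij, hbj, hik, hbk, hkmin, hmid⟩
  -- move computes EE
  have hmove : PipeDream.move n D i j = Stmt17Aux.EE D h i k j := by
    unfold PipeDream.move
    apply Stmt17Aux.moveAux_eq cfg (n+1) j (le_refl j) (by omega) hbj
    · calc ((Finset.Ioc j k).filter (fun q => D (h, q) = false)).card
          ≤ (Finset.Ioc j k).card := Finset.card_filter_le _ _
        _ = k - j := Nat.card_Ioc j k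
        _ ≤ n + 1 := by omega
    · have := Nat.le_self_pow (show n + 2 ≠ 0 by omega) (n+2)
      omega
  refine ⟨?_, ?_, ?_, ?_⟩
  · rw [hmove]
    refine (Stmt17Aux.fold_eq cfg (n+1) j (le_refl j) (by omega) hbj ?_).symm
    calc ((Finset.Icc j k).filter (fun q => D (h, q) = false)).card
        ≤ (Finset.Icc j k).card := Finset.card_filter_le _ _
      _ = k + 1 - j := Nat.card_Icc j k
      _ ≤ n + 1 := by omega
  · intro c hc1 hc2
    rw [hmove, Stmt17Aux.EE_eval]
    constructor
    · intro hEE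
      by_contra hne
      have hcj : j < c := by omega
      rw [if_neg (fun hcon => absurd hcon.1 (by omega))] at hEE
      by_cases hb : D (h, c) = false
      · rw [if_pos ⟨rfl, hcj, hc2, hb⟩] at hEE
        simp at hEE
      · rw [if_neg (fun hcon => hb hcon.2.2.2)] at hEE
        exact hb hEE
    · rintro rfl
      rw [if_neg (fun hcon => absurd hcon.1 (by omega)),
        if_neg (fun hcon => absurd hcon.2.1 (by omega))]
      exact hbj
  · intro s c hs1 hs2 hc1 hc2
    rw [hmove, Stmt17Aux.EE_eval]
    rw [if_neg (fun hcon => absurd hcon.1 (by omega)),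
      if_neg (fun hcon => absurd hcon.1 (by omega))]
    exact hmid s c hs1 hs2 hc1 hc2
  · intro c hc1 hc2
    rw [hmove, Stmt17Aux.EE_eval]
    by_cases hck : c = k
    · rw [if_neg (fun hcon => absurd hcon.2.2.1 (by omega)),
        if_neg (fun hcon => absurd hcon.1 (by omega))]
      subst hck
      rw [hik, hbk]
    · have hck2 : c < k := by omega
      by_cases hb : D (h, c) = false
      · rw [if_pos ⟨rfl, hc1, hck2, hb⟩]
        simp [hb]
      · rw [if_neg (fun hcon => hb hcon.2.2.2),
          if_neg (fun hcon => absurd hcon.1 (by omega))]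
        constructor
        · intro hEE
          rw [cfg.rowi' c hc1 hck2] at hEE
          exact absurd hEE (by simp)
        · intro hEE
          exact absurd hEE hb
end

section
/- Let D be a reduced pipe dream and (i,j) a movable cross tile. Then M_{ij}(D) agrees with D on every tile outside Shape_{ij}(D); in particular M_{ij} only changes tiles (s,t) with h_{ij}(D) ≤ s ≤ i and j ≤ t ≤ k_{ij}(D) that lie weakly below Path_{ij}(D), and M_{ij}(D) > D in the ladder-move order (it is obtained from D by a nonempty sequence of generalized ladder moves). -/
open Finset

namespace PDProof
open PipeDream

/-- adjacent transposition -/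
def sw (a : ℕ) : Equiv.Perm ℕ := Equiv.swap a (a+1)

/-- product of adjacent transpositions -/
def sp (l : List ℕ) : Equiv.Perm ℕ := (List.map (fun k => Equiv.swap k (k + 1)) l).prod

@[simp] lemma sp_nil : sp [] = 1 := rfl

lemma sp_cons (a : ℕ) (l : List ℕ) : sp (a :: l) = sw a * sp l := by
  simp [sp, sw]

lemma sp_append (X Y : List ℕ) : sp (X ++ Y) = sp X * sp Y := by
  simp [sp]

lemma sw_apply (a x : ℕ) : sw a x = if x = a then a+1 else if x = a+1 then a else x := by
  simp [sw, Equiv.swap_apply_def]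

lemma sw_commute {a b : ℕ} (h : a + 2 ≤ b) : Commute (sw a) (sw b) := by
  have : ∀ x, (sw a * sw b) x = (sw b * sw a) x := by
    intro x
    simp only [Equiv.Perm.mul_apply, sw_apply]
    split_ifs <;> omega
  exact Equiv.ext this

lemma sp_commute {X Y : List ℕ} (h : ∀ x ∈ X, ∀ y ∈ Y, x + 2 ≤ y ∨ y + 2 ≤ x) :
    Commute (sp X) (sp Y) := by
  induction X with
  | nil => simp [Commute, SemiconjBy]
  | cons a l ih =>
      rw [sp_cons]
      refine Commute.mul_left ?_ (ih (fun x hx => h x (by simp [hx])))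
      refine Commute.list_prod_right _ _ ?_
      intro p hp
      simp only [List.mem_map] at hp
      obtain ⟨y, hy, rfl⟩ := hp
      rcases h a (by simp) y hy with h' | h'
      · exact sw_commute h'
      · exact (sw_commute h').symm

/-- descending run [M, M-1, ..., m] -/
def descL (M m : ℕ) : List ℕ := (List.range' m (M + 1 - m)).reverse

@[simp] lemma descL_empty {M m : ℕ} (h : M + 1 ≤ m) : descL M m = [] := by
  simp [descL, Nat.sub_eq_zero_of_le h]

lemma descL_single (m : ℕ) : descL m m = [m] := by
  simp [descL]

lemma descL_cons {M m : ℕ} (h : m ≤ M) (h1 : 1 ≤ M) : descL M m = M :: descL (M-1) m := by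
  have h1 : M + 1 - m = (M - m) + 1 := by omega
  have h2 : (M - 1) + 1 - m = M - m := by omega
  have h3 : m + 1 * (M - m) = M := by omega
  rw [descL, h1, List.range'_concat, h3, List.reverse_append, descL, h2]
  simp

lemma descL_length (M m : ℕ) : (descL M m).length = M + 1 - m := by
  simp [descL]

lemma mem_descL {M m x : ℕ} (h : x ∈ descL M m) : m ≤ x ∧ x ≤ M := by
  simp only [descL, List.mem_reverse, List.mem_range'] at h
  omega

/-- pointwise formula for the product of a descending run -/
lemma sp_descL_apply : ∀ (d m x : ℕ), sp (descL (m + d) m) x =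
    if x = m then m + d + 1 else if m < x ∧ x ≤ m + d + 1 then x - 1 else x := by
  intro d
  induction d with
  | zero =>
      intro m x
      simp only [Nat.add_zero]
      rw [descL_single, sp_cons, sp_nil, mul_one, sw_apply]
      split_ifs <;> omega
  | succ d ih =>
      intro m x
      have h1 : m ≤ m + (d+1) := by omega
      rw [descL_cons h1 (by omega)]
      have h2 : m + (d + 1) - 1 = m + d := by omega
      rw [h2, sp_cons, Equiv.Perm.mul_apply, ih m x, sw_apply]
      split_ifs <;> omega

lemma sp_descL_apply' {M m : ℕ} (h : m ≤ M + 1) (x : ℕ) : sp (descL M m) x =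
    if x = m then M + 1 else if m < x ∧ x ≤ M + 1 then x - 1 else x := by
  rcases Nat.lt_or_ge M m with h' | h'
  · have hm : M + 1 = m := by omega
    rw [descL_empty (by omega)]
    simp only [sp_nil, Equiv.Perm.one_apply, hm]
    split_ifs <;> omega
  · obtain ⟨d, rfl⟩ : ∃ d, M = m + d := ⟨M - m, by omega⟩
    exact sp_descL_apply d m x

/-- the engine identity -/
lemma engine {M m : ℕ} (hm : 1 ≤ m) (h : m ≤ M) :
    sp (descL (M-1) m) * sp (descL M m) = sp (descL M m) * sp (descL M (m+1)) := by
  apply Equiv.ext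
  intro x
  simp only [Equiv.Perm.mul_apply]
  rw [sp_descL_apply' (M := M - 1) (m := m) (by omega),
      sp_descL_apply' (M := M) (m := m) (by omega),
      sp_descL_apply' (M := M) (m := m + 1) (by omega),
      sp_descL_apply' (M := M) (m := m) (by omega)]
  have hM : M - 1 + 1 = M := by omega
  split_ifs <;> omega



lemma sp_single (a : ℕ) : sp [a] = sw a := by
  rw [sp_cons, sp_nil, mul_one]

lemma sw_sq (a : ℕ) : sw a * sw a = 1 := by
  rw [sw, Equiv.swap_mul_self]

/-- concatenation of blocks g h, g (h+1), ..., g (h+d-1) -/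
def blocks (g : ℕ → List ℕ) (h d : ℕ) : List ℕ := (List.range' h d).flatMap g

@[simp] lemma blocks_zero (g : ℕ → List ℕ) (h : ℕ) : blocks g h 0 = [] := rfl

lemma blocks_succ (g : ℕ → List ℕ) (h d : ℕ) :
    blocks g h (d+1) = g h ++ blocks g (h+1) d := by
  simp [blocks, List.range'_succ]

lemma mem_blocks {g : ℕ → List ℕ} {h d x : ℕ} (hx : x ∈ blocks g h d) :
    ∃ r, h ≤ r ∧ r < h + d ∧ x ∈ g r := by
  simp only [blocks, List.mem_flatMap, List.mem_range'] at hx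
  obtain ⟨r, ⟨hr1, hr2⟩, hr3⟩ := hx
  exact ⟨r, by omega, by omega, hr3⟩

/-- the zone identity: moving a cross from the bottom-left to the top-right of a
full rectangle of crosses preserves the product. -/
lemma zoneP : ∀ (e h j k : ℕ), 1 ≤ j → j < k →
    sp (descL (h+k-2) (h+j) ++ blocks (fun r => descL (r+k-1) (r+j-1)) (h+1) e
        ++ descL (h+1+e+k-2) (h+1+e+j-1))
    = sp (descL (h+k-1) (h+j) ++ blocks (fun r => descL (r+k-1) (r+j-1)) (h+1) e
        ++ descL (h+1+e+k-2) (h+1+e+j)) := by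
  intro e
  induction e with
  | zero =>
      intro h j k hj hjk
      simp only [blocks_zero, List.nil_append, List.append_nil, sp_append]
      have e1 : h+1+0+k-2 = h+k-1 := by omega
      have e2 : h+1+0+j-1 = h+j := by omega
      have e3 : h+1+0+j = h+j+1 := by omega
      rw [e1, e2, e3]
      exact engine (m := h+j) (M := h+k-1) (by omega) (by omega)
  | succ e ih =>
      intro h j k hj hjk
      have hF : descL (h+1+k-1) (h+1+j-1) = (h+k) :: descL (h+k-1) (h+j) := by
        have e1 : h+1+k-1 = h+k := by omega
        have e2 : h+1+j-1 = h+j := by omega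
        rw [e1, e2]
        exact descL_cons (by omega) (by omega)
      have hFsp : sp (descL (h+1+k-1) (h+1+j-1)) = sw (h+k) * sp (descL (h+k-1) (h+j)) := by
        rw [hF, sp_cons]
      -- step A : sp X1h * sp F = sp F * sp X1h'
      have stepA : sp (descL (h+k-2) (h+j)) * sp (descL (h+1+k-1) (h+1+j-1))
          = sp (descL (h+1+k-1) (h+1+j-1)) * sp (descL (h+1+k-2) (h+1+j)) := by
        have hcomm : Commute (sp (descL (h+k-2) (h+j))) (sw (h+k)) := by
          rw [← sp_single]
          apply sp_commute
          intro x hx y hy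
          simp only [List.mem_singleton] at hy
          subst hy
          have := mem_descL hx
          omega
        have e4 : h+1+k-2 = h+k-1 := by omega
        have e5 : h+1+j = h+j+1 := by omega
        have eng := engine (m := h+j) (M := h+k-1) (by omega) (by omega)
        rw [show h+k-1-1 = h+k-2 by omega] at eng
        rw [hFsp, ← mul_assoc, hcomm.eq, mul_assoc, eng, e4, e5, ← mul_assoc]
      -- step B : sp X2h * sp F = sp F * sp X2h'
      have stepB : sp (descL (h+1+k-1) (h+1+j-1)) * sp (descL (h+1+k-1) (h+1+j))
          = sp (descL (h+k-1) (h+j)) * sp (descL (h+1+k-1) (h+1+j-1)) := by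
        have e1 : h+1+k-1 = h+k := by omega
        have e2 : h+1+j-1 = h+j := by omega
        have e3 : h+1+j = h+j+1 := by omega
        rw [e1, e2, e3]
        exact (engine (m := h+j) (M := h+k) (by omega) (by omega)).symm
      have ih' := ih (h+1) j k hj hjk
      have e6 : h+1+1+e+k-2 = h+1+(e+1)+k-2 := by omega
      have e7 : h+1+1+e+j-1 = h+1+(e+1)+j-1 := by omega
      have e8 : h+1+1+e+j = h+1+(e+1)+j := by omega
      rw [e6, e7, e8] at ih'
      calc sp (descL (h+k-2) (h+j) ++ blocks (fun r => descL (r+k-1) (r+j-1)) (h+1) (e+1)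
            ++ descL (h+1+(e+1)+k-2) (h+1+(e+1)+j-1))
          = sp (descL (h+k-2) (h+j)) * sp (descL (h+1+k-1) (h+1+j-1))
              * (sp (blocks (fun r => descL (r+k-1) (r+j-1)) (h+1+1) e)
                * sp (descL (h+1+(e+1)+k-2) (h+1+(e+1)+j-1))) := by
            rw [blocks_succ]
            simp only [sp_append, mul_assoc]
        _ = sp (descL (h+1+k-1) (h+1+j-1)) * sp (descL (h+1+k-2) (h+1+j)
              ++ blocks (fun r => descL (r+k-1) (r+j-1)) (h+1+1) e
              ++ descL (h+1+(e+1)+k-2) (h+1+(e+1)+j-1)) := by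
            rw [stepA]
            simp only [sp_append, mul_assoc]
        _ = sp (descL (h+1+k-1) (h+1+j-1)) * sp (descL (h+1+k-1) (h+1+j)
              ++ blocks (fun r => descL (r+k-1) (r+j-1)) (h+1+1) e
              ++ descL (h+1+(e+1)+k-2) (h+1+(e+1)+j)) := by
            rw [ih']
        _ = sp (descL (h+k-1) (h+j) ++ blocks (fun r => descL (r+k-1) (r+j-1)) (h+1) (e+1)
              ++ descL (h+1+(e+1)+k-2) (h+1+(e+1)+j)) := by
            rw [blocks_succ]
            simp only [sp_append, ← mul_assoc]
            rw [stepB]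
            

/-- the double-crossing identity -/
lemma zoneL (e h j k : ℕ) (hj : 1 ≤ j) (hjk : j < k) :
    sp (descL (h+k-1) (h+j) ++ blocks (fun r => descL (r+k-1) (r+j-1)) (h+1) e
        ++ descL (h+1+e+k-2) (h+1+e+j-1))
    = sp (descL (h+k-2) (h+j) ++ blocks (fun r => descL (r+k-1) (r+j-1)) (h+1) e
        ++ descL (h+1+e+k-2) (h+1+e+j)) := by
  have hP := zoneP e h j k hj hjk
  have hX2 : sp (descL (h+k-1) (h+j)) = sw (h+k-1) * sp (descL (h+k-2) (h+j)) := by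
    rw [descL_cons (by omega) (by omega), sp_cons, show h+k-1-1 = h+k-2 by omega]
  simp only [sp_append, mul_assoc] at hP ⊢
  rw [hX2, mul_assoc, hP, hX2, mul_assoc (sw (h+k-1)) (sp (descL (h+k-2) (h+j))),
      ← mul_assoc (sw (h+k-1)) (sw (h+k-1)), sw_sq, one_mul]


/-! ### Word decomposition -/

def letterF (D : PipeDream) (i : ℕ) : ℕ → Option ℕ :=
  fun j => if D (i + 1, j + 1) = true then some (i + j + 1) else none

def rowWord (n : ℕ) (D : PipeDream) (i : ℕ) : List ℕ :=
  (List.range n).reverse.filterMap (letterF D i)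

lemma word_eq (n : ℕ) (D : PipeDream) :
    PipeDream.word n D = (List.range n).flatMap (rowWord n D) := rfl

def colPart (D : PipeDream) (i lo len : ℕ) : List ℕ :=
  (List.range' lo len).reverse.filterMap (letterF D i)

lemma range'_split3 (a b c n : ℕ) (h : a + b + c = n) :
    List.range n = List.range' 0 a ++ List.range' a b ++ List.range' (a+b) c := by
  rw [List.range_eq_range', List.append_assoc]
  have h1 : List.range' a b ++ List.range' (a+b) c = List.range' a (b+c) := by
    have := List.range'_append (step := 1) (s := a) (m := b) (n := c)
    rw [one_mul] at this
    exact this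
  have h2 : List.range' 0 a ++ List.range' a (b+c) = List.range' 0 (a+(b+c)) := by
    have := List.range'_append (step := 1) (s := 0) (m := a) (n := b+c)
    rw [one_mul, Nat.zero_add] at this
    exact this
  rw [h1, h2, show a+(b+c) = n by omega]

lemma rowWord_split (n : ℕ) (D : PipeDream) (i j' k : ℕ)
    (hj : 1 ≤ j') (hjk : j' ≤ k) (hk : k ≤ n) :
    rowWord n D i = colPart D i k (n-k) ++ colPart D i (j'-1) (k-j'+1) ++ colPart D i 0 (j'-1) := by
  rw [rowWord, range'_split3 (j'-1) (k-j'+1) (n-k) n (by omega),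
      show j'-1 + (k-j'+1) = k by omega]
  simp [colPart, List.filterMap_append]

lemma mem_colPart {D : PipeDream} {i lo len x : ℕ} (h : x ∈ colPart D i lo len) :
    i + lo + 1 ≤ x ∧ x ≤ i + lo + len := by
  simp only [colPart, List.mem_filterMap, List.mem_reverse, List.mem_range'] at h
  obtain ⟨j, ⟨hj1, hj2⟩, hj3⟩ := h
  simp only [letterF] at hj3
  split at hj3
  · cases hj3; omega
  · cases hj3

lemma colPart_congr {D E : PipeDream} {i lo len : ℕ}
    (h : ∀ c, lo + 1 ≤ c → c ≤ lo + len → D (i+1, c) = E (i+1, c)) :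
    colPart D i lo len = colPart E i lo len := by
  unfold colPart
  apply List.filterMap_congr
  intro a ha
  simp only [List.mem_reverse, List.mem_range'] at ha
  simp only [letterF, h (a+1) (by omega) (by omega)]

lemma rowWord_congr {n : ℕ} {D E : PipeDream} {i : ℕ}
    (h : ∀ c, D (i+1, c) = E (i+1, c)) : rowWord n D i = rowWord n E i := by
  unfold rowWord
  apply List.filterMap_congr
  intro a _
  simp only [letterF, h (a+1)]

lemma colPart_split {D : PipeDream} {i lo len : ℕ} :
    colPart D i lo (len+1) = (letterF D i (lo+len)).toList ++ colPart D i lo len := by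
  unfold colPart
  rw [List.range'_concat, List.reverse_append, one_mul]
  cases hfa : letterF D i (lo+len) with
  | none => simp [List.filterMap_cons, hfa]
  | some b => simp [List.filterMap_cons, hfa]

lemma colPart_desc {D : PipeDream} {i lo : ℕ} {x : ℕ} :
    ∀ (len : ℕ) (y : ℕ), lo + 1 ≤ x → (x ≤ y → y ≤ lo + len) →
    (∀ c, lo + 1 ≤ c → c ≤ lo + len → (D (i+1, c) = true ↔ (x ≤ c ∧ c ≤ y))) →
    colPart D i lo len = descL (i + y) (i + x) := by
  intro len
  induction len with
  | zero =>
      intro y hx hy _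
      rw [show colPart D i lo 0 = [] from rfl, descL_empty (by omega)]
  | succ len ih =>
      intro y hx hy hp
      by_cases hD : D (i+1, lo+len+1) = true
      · have hc := (hp (lo+len+1) (by omega) (by omega)).mp hD
        have hyv : y = lo+len+1 := by
          have := hy (by omega)
          omega
        subst hyv
        have hlf : letterF D i (lo+len) = some (i+(lo+len)+1) := by
          simp only [letterF]
          rw [if_pos]
          exact hD
        have htail : colPart D i lo len = descL (i + (lo+len)) (i + x) := by
          apply ih (lo+len) hx (fun _ => le_refl _)
          intro c hc1 hc2
          rw [hp c hc1 (by omega)]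
          omega
        rw [colPart_split, hlf, htail,
            descL_cons (M := i + (lo+len+1)) (m := i + x) (by omega) (by omega),
            show i + (lo+len+1) - 1 = i + (lo+len) by omega]
        simp
        omega
      · have hnc := hp (lo+len+1) (by omega) (by omega)
        have hyle : x ≤ y → y ≤ lo + len := by
          intro hxy
          have h5 := hy hxy
          by_contra hcon
          have : y = lo+len+1 := by omega
          subst this
          exact hD (hnc.mpr ⟨hxy, le_refl _⟩)
        have hlf : letterF D i (lo+len) = none := by
          simp only [letterF]
          rw [if_neg]
          simpa using hD
        rw [colPart_split, hlf]
        simpa using ih y hx hyle (fun c hc1 hc2 => hp c hc1 (by omega))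

/-! ### Rearrangement -/

lemma blocks_concat (g : ℕ → List ℕ) (s d : ℕ) :
    blocks g s (d+1) = blocks g s d ++ g (s+d) := by
  unfold blocks
  rw [List.range'_concat]
  simp

lemma blocks_shift (g : ℕ → List ℕ) : ∀ (d s : ℕ),
    blocks g (s+1) d = blocks (fun t => g (t+1)) s d := by
  intro d
  induction d with
  | zero => intro s; rfl
  | succ d ih =>
      intro s
      rw [blocks_succ, blocks_succ, ih]

lemma blocks_congr {g g' : ℕ → List ℕ} {s d : ℕ}
    (h : ∀ t, s ≤ t → t < s + d → g t = g' t) :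
    blocks g s d = blocks g' s d := by
  unfold blocks
  apply List.flatMap_congr
  intro t ht
  simp only [List.mem_range'] at ht
  exact h t (by omega) (by omega)

lemma sp_blocks_commute {X : List ℕ} {g : ℕ → List ℕ} {s d : ℕ}
    (h : ∀ x ∈ X, ∀ t, s ≤ t → t < s + d → ∀ y ∈ g t, x + 2 ≤ y ∨ y + 2 ≤ x) :
    Commute (sp X) (sp (blocks g s d)) := by
  apply sp_commute
  intro x hx y hy
  obtain ⟨r, hr1, hr2, hr3⟩ := mem_blocks hy
  exact h x hx r hr1 hr2 y hr3

/-- rearranging a product of rows into column blocks -/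
lemma sp_rows (Cf Zf Af : ℕ → List ℕ) (j' k : ℕ) (hjk : j' ≤ k) : ∀ (d s : ℕ),
    (∀ t, s ≤ t → t < s+d → ∀ x ∈ Cf t, t+k+1 ≤ x) →
    (∀ t, s ≤ t → t < s+d → ∀ x ∈ Zf t, t+j' ≤ x ∧ x ≤ t+k) →
    (∀ t, s ≤ t → t < s+d → ∀ x ∈ Af t, x+2 ≤ t+j'+1) →
    sp (blocks (fun t => Cf t ++ Zf t ++ Af t) s d)
      = sp (blocks Cf s d) * sp (blocks Zf s d) * sp (blocks Af s d) := by
  intro d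
  induction d with
  | zero => intro s _ _ _; simp
  | succ d ih =>
      intro s hC hZ hA
      rw [blocks_succ, blocks_succ, blocks_succ, blocks_succ]
      rw [sp_append, sp_append, sp_append, sp_append, sp_append, sp_append]
      rw [ih (s+1) (fun t ht1 ht2 => hC t (by omega) (by omega))
            (fun t ht1 ht2 => hZ t (by omega) (by omega))
            (fun t ht1 ht2 => hA t (by omega) (by omega))]
      have hAC' : Commute (sp (Af s)) (sp (blocks Cf (s+1) d)) := by
        apply sp_blocks_commute
        intro x hx t ht1 ht2 y hy
        have h1 := hA s (by omega) (by omega) x hx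
        have h2 := hC t (by omega) (by omega) y hy
        omega
      have hAZ' : Commute (sp (Af s)) (sp (blocks Zf (s+1) d)) := by
        apply sp_blocks_commute
        intro x hx t ht1 ht2 y hy
        have h1 := hA s (by omega) (by omega) x hx
        have h2 := hZ t (by omega) (by omega) y hy
        omega
      have hZC' : Commute (sp (Zf s)) (sp (blocks Cf (s+1) d)) := by
        apply sp_blocks_commute
        intro x hx t ht1 ht2 y hy
        have h1 := hZ s (by omega) (by omega) x hx
        have h2 := hC t (by omega) (by omega) y hy
        omega
      -- goal : Cs * Zs * As * (C' * Z' * A') = (Cs * C') * (Zs * Z') * (As * A')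
      calc sp (Cf s) * sp (Zf s) * sp (Af s) *
            (sp (blocks Cf (s+1) d) * sp (blocks Zf (s+1) d) * sp (blocks Af (s+1) d))
          = sp (Cf s) * sp (Zf s) *
            (sp (Af s) * (sp (blocks Cf (s+1) d) * sp (blocks Zf (s+1) d))
              * sp (blocks Af (s+1) d)) := by
            simp only [mul_assoc]
        _ = sp (Cf s) * sp (Zf s) *
            (sp (blocks Cf (s+1) d) * sp (blocks Zf (s+1) d) * (sp (Af s)
              * sp (blocks Af (s+1) d))) := by
            rw [(hAC'.mul_right hAZ').eq]
            simp only [mul_assoc]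
        _ = sp (Cf s) * (sp (Zf s) * sp (blocks Cf (s+1) d)) * (sp (blocks Zf (s+1) d)
              * (sp (Af s) * sp (blocks Af (s+1) d))) := by
            simp only [mul_assoc]
        _ = sp (Cf s) * (sp (blocks Cf (s+1) d) * sp (Zf s)) * (sp (blocks Zf (s+1) d)
              * (sp (Af s) * sp (blocks Af (s+1) d))) := by
            rw [hZC'.eq]
        _ = sp (Cf s) * sp (blocks Cf (s+1) d) * (sp (Zf s) * sp (blocks Zf (s+1) d))
              * (sp (Af s) * sp (blocks Af (s+1) d)) := by
            simp only [mul_assoc]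


/-! ### Mid-block analysis -/

lemma perm_eq_sp (n : ℕ) (D : PipeDream) : PipeDream.perm n D = sp (PipeDream.word n D) := rfl

lemma word_decomp (n : ℕ) (D : PipeDream) (h i' : ℕ)
    (hh : 1 ≤ h) (hhi : h ≤ i') (hin : i' ≤ n) :
    PipeDream.word n D = blocks (rowWord n D) 0 (h-1)
      ++ blocks (rowWord n D) (h-1) (i'-h+1) ++ blocks (rowWord n D) i' (n-i') := by
  rw [word_eq, range'_split3 (h-1) (i'-h+1) (n-i') n (by omega), List.flatMap_append,
      List.flatMap_append, show h-1+(i'-h+1) = i' by omega]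
  rfl

/-- splitting the middle rows block into first row, middle, last row -/
lemma blocks_split3 (g : ℕ → List ℕ) (h i' : ℕ) (hhi : h < i') (hh : 1 ≤ h) :
    blocks g (h-1) (i'-h+1) = g (h-1) ++ (blocks g h (i'-h-1) ++ g (i'-1)) := by
  rw [show i'-h+1 = (i'-h-1)+1+1 by omega, blocks_succ, blocks_concat,
      show h-1+1 = h by omega, show h+(i'-h-1) = i'-1 by omega]

lemma sp_mid (n : ℕ) (D : PipeDream) (h i' j' k x1 y1 x2 y2 : ℕ)
    (hh : 1 ≤ h) (hhi : h < i') (hin : i' ≤ n) (hj : 1 ≤ j') (hjk : j' < k) (hkn : k ≤ n)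
    (hx1 : j' ≤ x1) (hy1 : x1 ≤ y1 → y1 ≤ k) (hx2 : j' ≤ x2) (hy2 : x2 ≤ y2 → y2 ≤ k)
    (ph : ∀ c, j' ≤ c → c ≤ k → (D (h, c) = true ↔ (x1 ≤ c ∧ c ≤ y1)))
    (pmid : ∀ r c, h < r → r < i' → j' ≤ c → c ≤ k → D (r, c) = true)
    (pi : ∀ c, j' ≤ c → c ≤ k → (D (i', c) = true ↔ (x2 ≤ c ∧ c ≤ y2))) :
    sp (blocks (rowWord n D) (h-1) (i'-h+1))
      = sp (blocks (fun t => colPart D t k (n-k)) (h-1) (i'-h+1))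
        * (sp (descL (h-1+y1) (h-1+x1))
           * sp (blocks (fun r => descL (r+k-1) (r+j'-1)) (h+1) (i'-h-1))
           * sp (descL (i'-1+y2) (i'-1+x2)))
        * sp (blocks (fun t => colPart D t 0 (j'-1)) (h-1) (i'-h+1)) := by
  have hsplitrows : blocks (rowWord n D) (h-1) (i'-h+1)
      = blocks (fun t => colPart D t k (n-k) ++ colPart D t (j'-1) (k-j'+1)
          ++ colPart D t 0 (j'-1)) (h-1) (i'-h+1) := by
    apply blocks_congr
    intro t _ _
    exact rowWord_split n D t j' k hj (by omega) hkn
  rw [hsplitrows]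
  rw [sp_rows (fun t => colPart D t k (n-k)) (fun t => colPart D t (j'-1) (k-j'+1))
        (fun t => colPart D t 0 (j'-1)) j' k (by omega) (i'-h+1) (h-1)
        (fun t _ _ x hx => by
          have := mem_colPart hx; omega)
        (fun t _ _ x hx => by
          have := mem_colPart hx; constructor <;> omega)
        (fun t _ _ x hx => by
          have := mem_colPart hx; omega)]
  have hZh : colPart D (h-1) (j'-1) (k-j'+1) = descL (h-1+y1) (h-1+x1) := by
    apply colPart_desc (k-j'+1) y1 (by omega) (fun hxy => by have := hy1 hxy; omega)
    intro c hc1 hc2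
    rw [show h-1+1 = h by omega]
    exact ph c (by omega) (by omega)
  have hZi : colPart D (i'-1) (j'-1) (k-j'+1) = descL (i'-1+y2) (i'-1+x2) := by
    apply colPart_desc (k-j'+1) y2 (by omega) (fun hxy => by have := hy2 hxy; omega)
    intro c hc1 hc2
    rw [show i'-1+1 = i' by omega]
    exact pi c (by omega) (by omega)
  have hZmid : blocks (fun t => colPart D t (j'-1) (k-j'+1)) h (i'-h-1)
      = blocks (fun r => descL (r+k-1) (r+j'-1)) (h+1) (i'-h-1) := by
    rw [blocks_shift]
    apply blocks_congr
    intro t ht1 ht2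
    have hrow : colPart D t (j'-1) (k-j'+1) = descL (t+k) (t+j') := by
      apply colPart_desc (k-j'+1) k (by omega) (fun _ => by omega)
      intro c hc1 hc2
      constructor
      · intro _; omega
      · intro _
        exact pmid (t+1) c (by omega) (by omega) (by omega) (by omega)
    rw [hrow]
    congr 1 <;> omega
  have hzz : sp (blocks (fun t => colPart D t (j'-1) (k-j'+1)) (h-1) (i'-h+1))
      = sp (descL (h-1+y1) (h-1+x1))
        * sp (blocks (fun r => descL (r+k-1) (r+j'-1)) (h+1) (i'-h-1))
        * sp (descL (i'-1+y2) (i'-1+x2)) := by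
    rw [blocks_split3 _ h i' hhi hh]
    simp only [hZh, hZi, hZmid, sp_append]
    exact (mul_assoc _ _ _).symm
  rw [hzz]

lemma word_len (n : ℕ) (D : PipeDream) (h i' j' k x1 y1 x2 y2 : ℕ)
    (hh : 1 ≤ h) (hhi : h < i') (hin : i' ≤ n) (hj : 1 ≤ j') (hjk : j' < k) (hkn : k ≤ n)
    (hx1 : j' ≤ x1) (hy1 : x1 ≤ y1 → y1 ≤ k) (hx2 : j' ≤ x2) (hy2 : x2 ≤ y2 → y2 ≤ k)
    (ph : ∀ c, j' ≤ c → c ≤ k → (D (h, c) = true ↔ (x1 ≤ c ∧ c ≤ y1)))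
    (pi : ∀ c, j' ≤ c → c ≤ k → (D (i', c) = true ↔ (x2 ≤ c ∧ c ≤ y2))) :
    (PipeDream.word n D).length
      = (blocks (rowWord n D) 0 (h-1)).length + (blocks (rowWord n D) i' (n-i')).length
        + (blocks (rowWord n D) h (i'-h-1)).length
        + (colPart D (h-1) k (n-k)).length + (colPart D (h-1) 0 (j'-1)).length
        + (colPart D (i'-1) k (n-k)).length + (colPart D (i'-1) 0 (j'-1)).length
        + ((h-1+y1)+1-(h-1+x1)) + ((i'-1+y2)+1-(i'-1+x2)) := by
  rw [word_decomp n D h i' hh (by omega) hin, blocks_split3 _ h i' hhi hh]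
  have hZh : colPart D (h-1) (j'-1) (k-j'+1) = descL (h-1+y1) (h-1+x1) := by
    apply colPart_desc (k-j'+1) y1 (by omega) (fun hxy => by have := hy1 hxy; omega)
    intro c hc1 hc2
    rw [show h-1+1 = h by omega]
    exact ph c (by omega) (by omega)
  have hZi : colPart D (i'-1) (j'-1) (k-j'+1) = descL (i'-1+y2) (i'-1+x2) := by
    apply colPart_desc (k-j'+1) y2 (by omega) (fun hxy => by have := hy2 hxy; omega)
    intro c hc1 hc2
    rw [show i'-1+1 = i' by omega]
    exact pi c (by omega) (by omega)
  rw [rowWord_split n D (h-1) j' k hj (by omega) hkn,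
      rowWord_split n D (i'-1) j' k hj (by omega) hkn, hZh, hZi]
  simp only [List.length_append, descL_length]
  omega

/-! ### The two key permutation lemmas -/

lemma ladder_pattern_perm (n : ℕ) (D E : PipeDream) (h i' j' k : ℕ)
    (hh : 1 ≤ h) (hhi : h < i') (hin : i' ≤ n) (hj : 1 ≤ j') (hjk : j' < k) (hkn : k ≤ n)
    (pj : D (h, j') = false) (phk : D (h, k) = false)
    (pm : ∀ c, j' < c → c < k → D (h, c) = true)
    (pmid : ∀ r c, h < r → r < i' → j' ≤ c → c ≤ k → D (r, c) = true)
    (pi : ∀ c, j' ≤ c → c < k → D (i', c) = true) (pik : D (i', k) = false)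
    (hE : ∀ st, E st = if st = ((i' : ℕ), (j' : ℕ)) then false
        else if st = ((h : ℕ), (k : ℕ)) then true else D st) :
    PipeDream.perm n E = PipeDream.perm n D ∧
      (PipeDream.word n E).length = (PipeDream.word n D).length := by
  have hEeqD : ∀ r c, (r ≠ i' ∨ c ≠ j') → (r ≠ h ∨ c ≠ k) → E (r, c) = D (r, c) := by
    intro r c h1 h2
    rw [hE]
    rw [if_neg (by simp <;> omega), if_neg (by simp <;> omega)]
  have hEij : E (i', j') = false := by rw [hE]; simp
  have hEhk : E (h, k) = true := by
    rw [hE]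
    rw [if_neg (by simp <;> omega), if_pos rfl]
  -- patterns as interval characterizations
  have phD : ∀ c, j' ≤ c → c ≤ k → (D (h, c) = true ↔ (j'+1 ≤ c ∧ c ≤ k-1)) := by
    intro c hc1 hc2
    constructor
    · intro hc
      by_contra hcon
      have : c = j' ∨ c = k := by omega
      rcases this with rfl | rfl
      · rw [pj] at hc; exact Bool.false_ne_true hc
      · rw [phk] at hc; exact Bool.false_ne_true hc
    · intro hc; exact pm c (by omega) (by omega)
  have piD : ∀ c, j' ≤ c → c ≤ k → (D (i', c) = true ↔ (j' ≤ c ∧ c ≤ k-1)) := by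
    intro c hc1 hc2
    constructor
    · intro hc
      by_contra hcon
      have : c = k := by omega
      subst this
      rw [pik] at hc; exact Bool.false_ne_true hc
    · intro hc; exact pi c (by omega) (by omega)
  have phE : ∀ c, j' ≤ c → c ≤ k → (E (h, c) = true ↔ (j'+1 ≤ c ∧ c ≤ k)) := by
    intro c hc1 hc2
    by_cases hck : c = k
    · subst hck; rw [hEhk]; simp <;> omega
    · rw [hEeqD h c (by omega) (by omega)]
      rw [phD c hc1 hc2]
      omega
  have piE : ∀ c, j' ≤ c → c ≤ k → (E (i', c) = true ↔ (j'+1 ≤ c ∧ c ≤ k-1)) := by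
    intro c hc1 hc2
    by_cases hcj : c = j'
    · subst hcj; rw [hEij]; simp <;> omega
    · rw [hEeqD i' c (by omega) (by omega)]
      rw [piD c hc1 hc2]
      omega
  have pmidE : ∀ r c, h < r → r < i' → j' ≤ c → c ≤ k → E (r, c) = true := by
    intro r c h1 h2 h3 h4
    rw [hEeqD r c (by omega) (by omega)]
    exact pmid r c h1 h2 h3 h4
  -- pre/post and C/A blocks agree
  have hpre : blocks (rowWord n E) 0 (h-1) = blocks (rowWord n D) 0 (h-1) := by
    apply blocks_congr
    intro t _ ht2
    apply rowWord_congr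
    intro c
    exact hEeqD (t+1) c (by omega) (by omega)
  have hpost : blocks (rowWord n E) i' (n-i') = blocks (rowWord n D) i' (n-i') := by
    apply blocks_congr
    intro t ht1 _
    apply rowWord_congr
    intro c
    exact hEeqD (t+1) c (by omega) (by omega)
  have hmidrows : blocks (rowWord n E) h (i'-h-1) = blocks (rowWord n D) h (i'-h-1) := by
    apply blocks_congr
    intro t ht1 ht2
    apply rowWord_congr
    intro c
    exact hEeqD (t+1) c (by omega) (by omega)
  have hCblk : blocks (fun t => colPart E t k (n-k)) (h-1) (i'-h+1)
      = blocks (fun t => colPart D t k (n-k)) (h-1) (i'-h+1) := by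
    apply blocks_congr
    intro t _ _
    apply colPart_congr
    intro c hc1 _
    exact hEeqD (t+1) c (by omega) (by omega)
  have hAblk : blocks (fun t => colPart E t 0 (j'-1)) (h-1) (i'-h+1)
      = blocks (fun t => colPart D t 0 (j'-1)) (h-1) (i'-h+1) := by
    apply blocks_congr
    intro t _ _
    apply colPart_congr
    intro c _ hc2
    exact hEeqD (t+1) c (by omega) (by omega)
  have hCh : colPart E (h-1) k (n-k) = colPart D (h-1) k (n-k) := by
    apply colPart_congr; intro c hc1 _; exact hEeqD (h-1+1) c (by omega) (by omega)
  have hAh : colPart E (h-1) 0 (j'-1) = colPart D (h-1) 0 (j'-1) := by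
    apply colPart_congr; intro c _ hc2; exact hEeqD (h-1+1) c (by omega) (by omega)
  have hCi : colPart E (i'-1) k (n-k) = colPart D (i'-1) k (n-k) := by
    apply colPart_congr; intro c hc1 _; exact hEeqD (i'-1+1) c (by omega) (by omega)
  have hAi : colPart E (i'-1) 0 (j'-1) = colPart D (i'-1) 0 (j'-1) := by
    apply colPart_congr; intro c _ hc2; exact hEeqD (i'-1+1) c (by omega) (by omega)
  have hspD := sp_mid n D h i' j' k (j'+1) (k-1) j' (k-1) hh hhi hin hj hjk hkn
    (by omega) (fun _ => by omega) (by omega) (fun _ => by omega) phD pmid piD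
  have hspE := sp_mid n E h i' j' k (j'+1) k (j'+1) (k-1) hh hhi hin hj hjk hkn
    (by omega) (fun _ => by omega) (by omega) (fun _ => by omega) phE pmidE piE
  -- the zone identity
  have hzone := zoneP (i'-h-1) h j' k hj hjk
  rw [sp_append, sp_append, sp_append, sp_append] at hzone
  have e1 : h+k-2 = h-1+(k-1) := by omega
  have e2 : h+j' = h-1+(j'+1) := by omega
  have e3 : h+1+(i'-h-1)+k-2 = i'-1+(k-1) := by omega
  have e4 : h+1+(i'-h-1)+j'-1 = i'-1+j' := by omega
  have e5 : h+k-1 = h-1+k := by omega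
  have e6 : h+1+(i'-h-1)+j' = i'-1+(j'+1) := by omega
  rw [e1, e2, e3, e4, e5, e6] at hzone
  constructor
  · rw [perm_eq_sp, perm_eq_sp, word_decomp n E h i' hh (by omega) hin,
        word_decomp n D h i' hh (by omega) hin]
    rw [sp_append, sp_append, sp_append, sp_append]
    rw [hpre, hpost, hspD, hspE, hCblk, hAblk, hzone]
  · rw [word_len n E h i' j' k (j'+1) k (j'+1) (k-1) hh hhi hin hj hjk hkn
        (by omega) (fun _ => by omega) (by omega) (fun _ => by omega) phE piE,
       word_len n D h i' j' k (j'+1) (k-1) j' (k-1) hh hhi hin hj hjk hkn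
        (by omega) (fun _ => by omega) (by omega) (fun _ => by omega) phD piD,
       hpre, hpost, hmidrows, hCh, hAh, hCi, hAi]
    omega

lemma double_pattern_perm (n : ℕ) (D E : PipeDream) (h i' j' k : ℕ)
    (hh : 1 ≤ h) (hhi : h < i') (hin : i' ≤ n) (hj : 1 ≤ j') (hjk : j' < k) (hkn : k ≤ n)
    (pj : D (h, j') = false) (phk : D (h, k) = true)
    (pm : ∀ c, j' < c → c < k → D (h, c) = true)
    (pmid : ∀ r c, h < r → r < i' → j' ≤ c → c ≤ k → D (r, c) = true)
    (pi : ∀ c, j' ≤ c → c < k → D (i', c) = true) (pik : D (i', k) = false)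
    (hE : ∀ st, E st = if st = ((i' : ℕ), (j' : ℕ)) ∨ st = ((h : ℕ), (k : ℕ)) then false
        else D st) :
    PipeDream.perm n E = PipeDream.perm n D ∧
      (PipeDream.word n E).length + 2 = (PipeDream.word n D).length := by
  have hEeqD : ∀ r c, (r ≠ i' ∨ c ≠ j') → (r ≠ h ∨ c ≠ k) → E (r, c) = D (r, c) := by
    intro r c h1 h2
    rw [hE]
    rw [if_neg (by simp; constructor <;> omega)]
  have hEij : E (i', j') = false := by rw [hE]; simp
  have hEhk : E (h, k) = false := by rw [hE]; simp
  have phD : ∀ c, j' ≤ c → c ≤ k → (D (h, c) = true ↔ (j'+1 ≤ c ∧ c ≤ k)) := by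
    intro c hc1 hc2
    constructor
    · intro hc
      by_contra hcon
      have : c = j' := by omega
      subst this
      rw [pj] at hc; exact Bool.false_ne_true hc
    · intro hc
      by_cases hck : c = k
      · subst hck; exact phk
      · exact pm c (by omega) (by omega)
  have piD : ∀ c, j' ≤ c → c ≤ k → (D (i', c) = true ↔ (j' ≤ c ∧ c ≤ k-1)) := by
    intro c hc1 hc2
    constructor
    · intro hc
      by_contra hcon
      have : c = k := by omega
      subst this
      rw [pik] at hc; exact Bool.false_ne_true hc
    · intro hc; exact pi c (by omega) (by omega)
  have phE : ∀ c, j' ≤ c → c ≤ k → (E (h, c) = true ↔ (j'+1 ≤ c ∧ c ≤ k-1)) := by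
    intro c hc1 hc2
    by_cases hck : c = k
    · subst hck; rw [hEhk]; simp <;> omega
    · rw [hEeqD h c (by omega) (by omega), phD c hc1 hc2]
      omega
  have piE : ∀ c, j' ≤ c → c ≤ k → (E (i', c) = true ↔ (j'+1 ≤ c ∧ c ≤ k-1)) := by
    intro c hc1 hc2
    by_cases hcj : c = j'
    · subst hcj; rw [hEij]; simp <;> omega
    · rw [hEeqD i' c (by omega) (by omega), piD c hc1 hc2]
      omega
  have pmidE : ∀ r c, h < r → r < i' → j' ≤ c → c ≤ k → E (r, c) = true := by
    intro r c h1 h2 h3 h4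
    rw [hEeqD r c (by omega) (by omega)]
    exact pmid r c h1 h2 h3 h4
  have hpre : blocks (rowWord n E) 0 (h-1) = blocks (rowWord n D) 0 (h-1) := by
    apply blocks_congr
    intro t _ ht2
    apply rowWord_congr
    intro c
    exact hEeqD (t+1) c (by omega) (by omega)
  have hpost : blocks (rowWord n E) i' (n-i') = blocks (rowWord n D) i' (n-i') := by
    apply blocks_congr
    intro t ht1 _
    apply rowWord_congr
    intro c
    exact hEeqD (t+1) c (by omega) (by omega)
  have hmidrows : blocks (rowWord n E) h (i'-h-1) = blocks (rowWord n D) h (i'-h-1) := by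
    apply blocks_congr
    intro t ht1 ht2
    apply rowWord_congr
    intro c
    exact hEeqD (t+1) c (by omega) (by omega)
  have hCblk : blocks (fun t => colPart E t k (n-k)) (h-1) (i'-h+1)
      = blocks (fun t => colPart D t k (n-k)) (h-1) (i'-h+1) := by
    apply blocks_congr
    intro t _ _
    apply colPart_congr
    intro c hc1 _
    exact hEeqD (t+1) c (by omega) (by omega)
  have hAblk : blocks (fun t => colPart E t 0 (j'-1)) (h-1) (i'-h+1)
      = blocks (fun t => colPart D t 0 (j'-1)) (h-1) (i'-h+1) := by
    apply blocks_congr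
    intro t _ _
    apply colPart_congr
    intro c _ hc2
    exact hEeqD (t+1) c (by omega) (by omega)
  have hCh : colPart E (h-1) k (n-k) = colPart D (h-1) k (n-k) := by
    apply colPart_congr; intro c hc1 _; exact hEeqD (h-1+1) c (by omega) (by omega)
  have hAh : colPart E (h-1) 0 (j'-1) = colPart D (h-1) 0 (j'-1) := by
    apply colPart_congr; intro c _ hc2; exact hEeqD (h-1+1) c (by omega) (by omega)
  have hCi : colPart E (i'-1) k (n-k) = colPart D (i'-1) k (n-k) := by
    apply colPart_congr; intro c hc1 _; exact hEeqD (i'-1+1) c (by omega) (by omega)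
  have hAi : colPart E (i'-1) 0 (j'-1) = colPart D (i'-1) 0 (j'-1) := by
    apply colPart_congr; intro c _ hc2; exact hEeqD (i'-1+1) c (by omega) (by omega)
  have hspD := sp_mid n D h i' j' k (j'+1) k j' (k-1) hh hhi hin hj hjk hkn
    (by omega) (fun _ => by omega) (by omega) (fun _ => by omega) phD pmid piD
  have hspE := sp_mid n E h i' j' k (j'+1) (k-1) (j'+1) (k-1) hh hhi hin hj hjk hkn
    (by omega) (fun _ => by omega) (by omega) (fun _ => by omega) phE pmidE piE
  have hzone := zoneL (i'-h-1) h j' k hj hjk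
  rw [sp_append, sp_append, sp_append, sp_append] at hzone
  have e1 : h+k-2 = h-1+(k-1) := by omega
  have e2 : h+j' = h-1+(j'+1) := by omega
  have e3 : h+1+(i'-h-1)+k-2 = i'-1+(k-1) := by omega
  have e4 : h+1+(i'-h-1)+j'-1 = i'-1+j' := by omega
  have e5 : h+k-1 = h-1+k := by omega
  have e6 : h+1+(i'-h-1)+j' = i'-1+(j'+1) := by omega
  rw [e1, e2, e3, e4, e5, e6] at hzone
  constructor
  · rw [perm_eq_sp, perm_eq_sp, word_decomp n E h i' hh (by omega) hin,
        word_decomp n D h i' hh (by omega) hin]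
    rw [sp_append, sp_append, sp_append, sp_append]
    rw [hpre, hpost, hspD, hspE, hCblk, hAblk, hzone]
  · rw [word_len n E h i' j' k (j'+1) (k-1) (j'+1) (k-1) hh hhi hin hj hjk hkn
        (by omega) (fun _ => by omega) (by omega) (fun _ => by omega) phE piE,
       word_len n D h i' j' k (j'+1) k j' (k-1) hh hhi hin hj hjk hkn
        (by omega) (fun _ => by omega) (by omega) (fun _ => by omega) phD piD,
       hpre, hpost, hmidrows, hCh, hAh, hCi, hAi]
    omega


/-! ### Inversion count bound -/

lemma untop'_min_spec {s : Finset ℕ} (hs : s.Nonempty) (d : ℕ) :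
    WithTop.untopD d s.min ∈ s ∧ ∀ x ∈ s, WithTop.untopD d s.min ≤ x := by
  obtain ⟨m, hm⟩ := Finset.min_of_nonempty hs
  rw [hm]
  refine ⟨Finset.mem_of_min hm, fun x hx => ?_⟩
  have := Finset.min_le hx
  rw [hm] at this
  exact_mod_cast this

lemma invCount_one (n : ℕ) : PipeDream.invCount 1 n = 0 := by
  rw [PipeDream.invCount, Finset.card_eq_zero, Finset.filter_eq_empty_iff]
  intro p _
  simp only [Equiv.Perm.one_apply]
  omega

lemma invCount_sw_mul_le (w : Equiv.Perm ℕ) (a n : ℕ) :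
    PipeDream.invCount (sw a * w) n ≤ PipeDream.invCount w n + 1 := by
  classical
  unfold PipeDream.invCount
  have hsub : ((Finset.Icc 1 n ×ˢ Finset.Icc 1 n).filter
      (fun p => p.1 < p.2 ∧ (sw a * w) p.2 < (sw a * w) p.1))
      ⊆ ((Finset.Icc 1 n ×ˢ Finset.Icc 1 n).filter
        (fun p => p.1 < p.2 ∧ w p.2 < w p.1)) ∪ {(w.symm a, w.symm (a+1))} := by
    intro p hp
    simp only [Finset.mem_filter] at hp
    obtain ⟨hmem, hlt, hinv⟩ := hp
    by_cases hw : w p.2 < w p.1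
    · exact Finset.mem_union_left _ (Finset.mem_filter.mpr ⟨hmem, hlt, hw⟩)
    · have hne : w p.1 ≠ w p.2 := fun hcon => by
        have := w.injective hcon; omega
      have hult : w p.1 < w p.2 := by omega
      have hkey : w p.1 = a ∧ w p.2 = a + 1 := by
        simp only [Equiv.Perm.mul_apply, sw_apply] at hinv
        split_ifs at hinv <;> omega
      apply Finset.mem_union_right
      simp only [Finset.mem_singleton]
      have h1 : p.1 = w.symm a := by
        rw [← hkey.1]; exact (Equiv.symm_apply_apply w p.1).symm
      have h2 : p.2 = w.symm (a+1) := by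
        rw [← hkey.2]; exact (Equiv.symm_apply_apply w p.2).symm
      rw [← h1, ← h2]
  calc ((Finset.Icc 1 n ×ˢ Finset.Icc 1 n).filter
      (fun p => p.1 < p.2 ∧ (sw a * w) p.2 < (sw a * w) p.1)).card
      ≤ (((Finset.Icc 1 n ×ˢ Finset.Icc 1 n).filter
        (fun p => p.1 < p.2 ∧ w p.2 < w p.1)) ∪ {(w.symm a, w.symm (a+1))}).card :=
        Finset.card_le_card hsub
    _ ≤ _ := by
        refine le_trans (Finset.card_union_le _ _) ?_
        simp

lemma invCount_sp_le (n : ℕ) : ∀ l : List ℕ, PipeDream.invCount (sp l) n ≤ l.length := by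
  intro l
  induction l with
  | nil => rw [show sp [] = 1 from rfl, invCount_one]; simp
  | cons a l ih =>
      rw [sp_cons]
      calc PipeDream.invCount (sw a * sp l) n ≤ PipeDream.invCount (sp l) n + 1 :=
            invCount_sw_mul_le _ _ _
        _ ≤ l.length + 1 := by omega
        _ = (a :: l).length := by simp


/-! ### Index lemmas -/

open PipeDream in
structure Ctx (n : ℕ) (D : PipeDream) (i j : ℕ) : Prop where
  hij : D (i, j) = true
  hj1 : 1 ≤ j
  hi2 : 2 ≤ i
  hijn : i + j ≤ n + 1
  hh1 : 1 ≤ hIdx D i j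
  hhi : hIdx D i j < i
  hbumph : D (hIdx D i j, j) = false
  hcolj : ∀ p, hIdx D i j < p → p < i → D (p, j) = true
  hjk : j < kIdx n D i j
  hkn : kIdx n D i j ≤ n
  hkstair : kIdx n D i j + i ≤ n + 2
  hbumpk : D (i, kIdx n D i j) = false
  hrowi : ∀ q, j < q → q < kIdx n D i j → D (i, q) = true

open PipeDream

lemma hIdx_spec {D : PipeDream} {i j : ℕ} (hne : ∃ h, 1 ≤ h ∧ h < i ∧ D (h, j) = false) :
    (1 ≤ hIdx D i j ∧ hIdx D i j < i ∧ D (hIdx D i j, j) = false) ∧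
      ∀ p, 1 ≤ p → p < i → D (p, j) = false → p ≤ hIdx D i j := by
  classical
  obtain ⟨h0, h1, h2, h3⟩ := hne
  have hmem : h0 ∈ (Finset.Ico 1 i).filter (fun h => D (h, j) = false) := by
    simp only [Finset.mem_filter, Finset.mem_Ico]
    exact ⟨⟨h1, h2⟩, h3⟩
  obtain ⟨b, hb, hsup⟩ := Finset.exists_mem_eq_sup _ ⟨h0, hmem⟩
      (id : ℕ → ℕ)
  simp only [Finset.mem_filter, Finset.mem_Ico] at hb
  constructor
  · rw [hIdx, hsup]
    exact ⟨hb.1.1, hb.1.2, hb.2⟩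
  · intro p hp1 hp2 hp3
    rw [hIdx]
    refine Finset.le_sup (f := id) ?_
    simp only [Finset.mem_filter, Finset.mem_Ico]
    exact ⟨⟨hp1, hp2⟩, hp3⟩

lemma hIdx_eq {D : PipeDream} {i j a : ℕ} (ha1 : 1 ≤ a) (hai : a < i)
    (hb : D (a, j) = false) (habove : ∀ p, a < p → p < i → D (p, j) = true) :
    hIdx D i j = a := by
  have hs := hIdx_spec ⟨a, ha1, hai, hb⟩
  obtain ⟨⟨hh1, hh2, hh3⟩, hmax⟩ := hs
  have hle : a ≤ hIdx D i j := hmax a ha1 hai hb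
  by_contra hne
  have : a < hIdx D i j := by omega
  have := habove _ this hh2
  rw [hh3] at this
  exact Bool.false_ne_true this

lemma kIdx_spec {n : ℕ} {D : PipeDream} {i j : ℕ}
    (hne : ∃ q, j + 1 ≤ q ∧ q ≤ n ∧ D (i, q) = false) :
    (j + 1 ≤ kIdx n D i j ∧ kIdx n D i j ≤ n ∧ D (i, kIdx n D i j) = false) ∧
      ∀ q, j + 1 ≤ q → q ≤ n → D (i, q) = false → kIdx n D i j ≤ q := by
  classical
  obtain ⟨q0, h1, h2, h3⟩ := hne
  have hmem : q0 ∈ (Finset.Icc (j+1) n).filter (fun k => D (i, k) = false) := by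
    simp only [Finset.mem_filter, Finset.mem_Icc]
    exact ⟨⟨h1, h2⟩, h3⟩
  obtain ⟨hmem', hmin⟩ := untop'_min_spec ⟨q0, hmem⟩ 0
  simp only [Finset.mem_filter, Finset.mem_Icc] at hmem'
  refine ⟨⟨hmem'.1.1, hmem'.1.2, hmem'.2⟩, fun q hq1 hq2 hq3 => ?_⟩
  exact hmin q (by simp only [Finset.mem_filter, Finset.mem_Icc]; exact ⟨⟨hq1, hq2⟩, hq3⟩)

lemma kIdx_eq {n : ℕ} {D : PipeDream} {i j b : ℕ} (hb1 : j + 1 ≤ b) (hbn : b ≤ n)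
    (hb : D (i, b) = false) (hmin : ∀ q, j < q → q < b → D (i, q) = true) :
    kIdx n D i j = b := by
  have hs := kIdx_spec ⟨b, hb1, hbn, hb⟩
  obtain ⟨⟨h1, h2, h3⟩, hm⟩ := hs
  have hle := hm b hb1 hbn hb
  by_contra hne
  have : kIdx n D i j < b := by omega
  have := hmin _ (by omega) this
  rw [h3] at this
  exact Bool.false_ne_true this

lemma hIdx_congr {D E : PipeDream} {i j : ℕ} (h : ∀ p, D (p, j) = E (p, j)) :
    hIdx D i j = hIdx E i j := by
  unfold hIdx
  congr 1
  apply Finset.filter_congr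
  intro p _
  rw [h p]

lemma kIdx_congr {n : ℕ} {D E : PipeDream} {i j : ℕ} (h : ∀ q, D (i, q) = E (i, q)) :
    kIdx n D i j = kIdx n E i j := by
  unfold kIdx
  congr 2
  apply Finset.filter_congr
  intro q _
  rw [h q]

lemma mkCtx {n : ℕ} {D : PipeDream} {i j : ℕ} (hst : InStaircase n D)
    (hmov : Movable D i j) : Ctx n D i j := by
  obtain ⟨hij, hex⟩ := hmov
  obtain ⟨hj1', hj1, hijn⟩ := hst i j hij
  have hi2 : 2 ≤ i := by
    obtain ⟨h0, h1, h2, _⟩ := hex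
    omega
  obtain ⟨⟨hh1, hh2, hh3⟩, hmax⟩ := hIdx_spec hex
  have hcolj : ∀ p, hIdx D i j < p → p < i → D (p, j) = true := by
    intro p hp1 hp2
    cases hDp : D (p, j)
    · exfalso
      have := hmax p (by omega) hp2 hDp
      omega
    · rfl
  have hkne : ∃ q, j + 1 ≤ q ∧ q ≤ n ∧ D (i, q) = false := by
    refine ⟨n + 2 - i, by omega, by omega, ?_⟩
    cases hDq : D (i, n + 2 - i)
    · rfl
    · exfalso
      have := hst i (n + 2 - i) hDq
      omega
  obtain ⟨⟨hk1, hk2, hk3⟩, hkmin⟩ := kIdx_spec hkne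
  have hrowi : ∀ q, j < q → q < kIdx n D i j → D (i, q) = true := by
    intro q hq1 hq2
    cases hDq : D (i, q)
    · exfalso
      have := hkmin q (by omega) (by omega) hDq
      omega
    · rfl
  have hkstair : kIdx n D i j + i ≤ n + 2 := by
    have := hkmin (n + 2 - i) (by omega) (by omega) (by
      cases hDq : D (i, n + 2 - i)
      · rfl
      · exfalso; have := hst i (n + 2 - i) hDq; omega)
    omega
  exact ⟨hij, hj1, hi2, hijn, hh1, hh2, hh3, hcolj, by omega, hk2, hkstair, hk3, hrowi⟩

/-! ### maxBumpRow / minBumpCol -/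

lemma maxBumpRow_spec {n : ℕ} {D : PipeDream} {i j : ℕ} (hhi : hIdx D i j < i)
    (hjk : j < kIdx n D i j) (hbumph : D (hIdx D i j, j) = false) :
    (hIdx D i j ≤ maxBumpRow n D i j ∧ maxBumpRow n D i j < i ∧
      ∃ q, j ≤ q ∧ q ≤ kIdx n D i j ∧ D (maxBumpRow n D i j, q) = false) ∧
      ∀ p q, maxBumpRow n D i j < p → p < i → j ≤ q → q ≤ kIdx n D i j →
        D (p, q) = true := by
  classical
  have hmem : hIdx D i j ∈ (Finset.Ico (hIdx D i j) i).filter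
      (fun p => ∃ q ∈ Finset.Icc j (kIdx n D i j), D (p, q) = false) := by
    rw [Finset.mem_filter, Finset.mem_Ico]
    exact ⟨⟨le_refl _, hhi⟩, j,
      Finset.mem_Icc.mpr ⟨le_refl _, by omega⟩, hbumph⟩
  obtain ⟨b, hb, hsup⟩ := Finset.exists_mem_eq_sup _ ⟨_, hmem⟩ (id : ℕ → ℕ)
  have hb1 := (Finset.mem_filter.mp hb).1
  rw [Finset.mem_Ico] at hb1
  obtain ⟨q, hq, hq3⟩ := (Finset.mem_filter.mp hb).2
  rw [Finset.mem_Icc] at hq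
  have hbr : maxBumpRow n D i j = b := by rw [maxBumpRow, hsup]; rfl
  constructor
  · rw [hbr]
    exact ⟨hb1.1, hb1.2, q, hq.1, hq.2, hq3⟩
  · intro p q' hp1 hp2 hq1 hq2
    cases hDp : D (p, q')
    · exfalso
      have hple : p ≤ maxBumpRow n D i j := by
        rw [maxBumpRow]
        refine Finset.le_sup (f := id) ?_
        rw [Finset.mem_filter, Finset.mem_Ico]
        exact ⟨⟨by omega, hp2⟩, q', Finset.mem_Icc.mpr ⟨hq1, hq2⟩, hDp⟩
      omega
    · rfl

lemma minBumpCol_spec {n : ℕ} {D : PipeDream} {i j : ℕ} (hhi : hIdx D i j < i)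
    (hjk : j < kIdx n D i j) (hbumpk : D (i, kIdx n D i j) = false) :
    (j + 1 ≤ minBumpCol n D i j ∧ minBumpCol n D i j ≤ kIdx n D i j ∧
      ∃ p, hIdx D i j ≤ p ∧ p ≤ i ∧ D (p, minBumpCol n D i j) = false) ∧
      ∀ q p, j < q → q < minBumpCol n D i j → hIdx D i j ≤ p → p ≤ i →
        D (p, q) = true := by
  classical
  have hmem : kIdx n D i j ∈ (Finset.Icc (j+1) (kIdx n D i j)).filter
      (fun q => ∃ p ∈ Finset.Icc (hIdx D i j) i, D (p, q) = false) := by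
    rw [Finset.mem_filter, Finset.mem_Icc]
    exact ⟨⟨by omega, le_refl _⟩,
      i, Finset.mem_Icc.mpr ⟨by omega, le_refl _⟩, hbumpk⟩
  obtain ⟨hmem', hmin⟩ := untop'_min_spec ⟨_, hmem⟩ 0
  have hbnd := (Finset.mem_filter.mp hmem').1
  rw [Finset.mem_Icc] at hbnd
  obtain ⟨p, hp, hp3⟩ := (Finset.mem_filter.mp hmem').2
  rw [Finset.mem_Icc] at hp
  rw [minBumpCol]
  constructor
  · exact ⟨hbnd.1, hbnd.2, p, hp.1, hp.2, hp3⟩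
  · intro q p' hq1 hq2 hp1 hp2
    cases hDp : D (p', q)
    · exfalso
      have := hmin q (by
        rw [Finset.mem_filter, Finset.mem_Icc]
        exact ⟨⟨by omega, by omega⟩, p', Finset.mem_Icc.mpr ⟨hp1, hp2⟩, hDp⟩)
      omega
    · rfl


/-! ### Path lemmas -/

lemma pathAux_succ (n : ℕ) (D : PipeDream) (j fuel p q : ℕ) :
    pathAux n D j (fuel+1) (p, q) =
      (if WithTop.untopD j (((Finset.Icc j n).filter
            (fun t => D (maxBumpRow n D p j, t) = false)).min) = j then
        ((Finset.Icc (maxBumpRow n D p j) p).image fun r => (r, q)) ∪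
          ((Finset.Icc (WithTop.untopD j (((Finset.Icc j n).filter
            (fun t => D (maxBumpRow n D p j, t) = false)).min)) q).image
              fun t => (maxBumpRow n D p j, t))
      else
        (((Finset.Icc (maxBumpRow n D p j) p).image fun r => (r, q)) ∪
          ((Finset.Icc (WithTop.untopD j (((Finset.Icc j n).filter
            (fun t => D (maxBumpRow n D p j, t) = false)).min)) q).image
              fun t => (maxBumpRow n D p j, t))) ∪
          pathAux n D j fuel (maxBumpRow n D p j,
            WithTop.untopD j (((Finset.Icc j n).filter
              (fun t => D (maxBumpRow n D p j, t) = false)).min))) := by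
  rfl

lemma path_main (n : ℕ) (D : PipeDream) (i j h : ℕ) (hj1 : 1 ≤ j)
    (hh1 : 1 ≤ h) (hbh : D (h, j) = false)
    (hcol : ∀ p, h < p → p < i → D (p, j) = true) :
    ∀ p, ∀ q fuel, h < p → p ≤ i → j < q → q ≤ n → D (p, q) = false → p - h ≤ fuel →
      ((∀ c, j ≤ c → c ≤ q → ∃ r, r ≤ p ∧ (r, c) ∈ pathAux n D j fuel (p, q)) ∧
       (∀ fuel', p - h ≤ fuel' → pathAux n D j fuel' (p, q) = pathAux n D j fuel (p, q))) := by
  intro p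
  induction p using Nat.strong_induction_on with
  | _ p IH =>
    intro q fuel hhp hpi hjq hqn hDpq hfuel
    -- basic index computations at row p
    have hIdxp : hIdx D p j = h := by
      apply hIdx_eq hh1 hhp hbh
      intro p' h1 h2
      exact hcol p' h1 (by omega)
    have hkspec := kIdx_spec (n := n) (D := D) (i := p) (j := j) ⟨q, by omega, hqn, hDpq⟩
    obtain ⟨⟨hkp1, hkp2, hkp3⟩, hkpmin⟩ := hkspec
    have hkpq : kIdx n D p j ≤ q := hkpmin q (by omega) hqn hDpq
    have hmb := maxBumpRow_spec (n := n) (D := D) (i := p) (j := j)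
      (by omega) (by omega) (by rw [hIdxp]; exact hbh)
    rw [hIdxp] at hmb
    obtain ⟨⟨hmb1, hmb2, qq, hqq1, hqq2, hqq3⟩, _⟩ := hmb
    set p₁ := maxBumpRow n D p j with hp₁
    -- the q' value
    have hFne : ((Finset.Icc j n).filter (fun t => D (p₁, t) = false)).Nonempty := by
      refine ⟨qq, ?_⟩
      rw [Finset.mem_filter, Finset.mem_Icc]
      exact ⟨⟨hqq1, by omega⟩, hqq3⟩
    obtain ⟨hq₁mem, hq₁min⟩ := untop'_min_spec hFne j
    set q₁ := WithTop.untopD j (((Finset.Icc j n).filter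
      (fun t => D (p₁, t) = false)).min) with hq₁
    have hq₁bnd := (Finset.mem_filter.mp hq₁mem).1
    rw [Finset.mem_Icc] at hq₁bnd
    have hq₁bump : D (p₁, q₁) = false := (Finset.mem_filter.mp hq₁mem).2
    have hq₁le : q₁ ≤ qq := hq₁min qq (by
      rw [Finset.mem_filter, Finset.mem_Icc]
      exact ⟨⟨hqq1, by omega⟩, hqq3⟩)
    obtain ⟨f, rfl⟩ : ∃ f, fuel = f + 1 := ⟨fuel - 1, by omega⟩
    by_cases hstop : q₁ = j
    · -- stop case
      have hpath : pathAux n D j (f+1) (p, q) =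
          ((Finset.Icc p₁ p).image fun r => (r, q)) ∪
            ((Finset.Icc j q).image fun t => (p₁, t)) := by
        rw [pathAux_succ, if_pos (by rw [← hq₁]; exact hstop), ← hq₁, hstop]
      constructor
      · intro c hc1 hc2
        refine ⟨p₁, by omega, ?_⟩
        rw [hpath]
        apply Finset.mem_union_right
        apply Finset.mem_image_of_mem
        rw [Finset.mem_Icc]
        exact ⟨hc1, hc2⟩
      · intro fuel' hfuel'
        obtain ⟨f', rfl⟩ : ∃ f', fuel' = f' + 1 := ⟨fuel' - 1, by omega⟩
        rw [hpath, pathAux_succ, if_pos (by rw [← hq₁]; exact hstop), ← hq₁, hstop]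
    · -- continue case
      have hp₁h : h < p₁ := by
        rcases Nat.lt_or_ge h p₁ with h' | h'
        · exact h'
        · exfalso
          have hp₁eq : p₁ = h := by omega
          apply hstop
          have : q₁ ≤ j := hq₁min j (by
            rw [Finset.mem_filter, Finset.mem_Icc, hp₁eq]
            exact ⟨⟨le_refl _, by omega⟩, hbh⟩)
          omega
      have hq₁j : j < q₁ := by
        rcases Nat.lt_or_ge j q₁ with h' | h'
        · exact h'
        · exfalso; exact hstop (by omega)
      have hrec := IH p₁ hmb2 q₁ f hp₁h (by omega) hq₁j (by omega) hq₁bump (by omega)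
      have hpath : pathAux n D j (f+1) (p, q) =
          (((Finset.Icc p₁ p).image fun r => (r, q)) ∪
            ((Finset.Icc q₁ q).image fun t => (p₁, t))) ∪
            pathAux n D j f (p₁, q₁) := by
        rw [pathAux_succ, if_neg (by rw [← hq₁]; exact hstop), ← hq₁]
      constructor
      · intro c hc1 hc2
        rcases Nat.lt_or_ge c q₁ with hcq | hcq
        · obtain ⟨r, hr1, hr2⟩ := hrec.1 c hc1 (by omega)
          refine ⟨r, by omega, ?_⟩
          rw [hpath]
          exact Finset.mem_union_right _ hr2
        · refine ⟨p₁, by omega, ?_⟩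
          rw [hpath]
          apply Finset.mem_union_left
          apply Finset.mem_union_right
          apply Finset.mem_image_of_mem
          rw [Finset.mem_Icc]
          exact ⟨hcq, hc2⟩
      · intro fuel' hfuel'
        obtain ⟨f', rfl⟩ : ∃ f', fuel' = f' + 1 := ⟨fuel' - 1, by omega⟩
        rw [hpath, pathAux_succ, if_neg (by rw [← hq₁]; exact hstop), ← hq₁]
        rw [hrec.2 f' (by omega)]


/-! ### Path structure at the top level -/

lemma pathAux_succ' (n : ℕ) (D : PipeDream) (j fuel p q : ℕ) (hf : 1 ≤ fuel) :
    pathAux n D j fuel (p, q) =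
      (if WithTop.untopD j (((Finset.Icc j n).filter
            (fun t => D (maxBumpRow n D p j, t) = false)).min) = j then
        ((Finset.Icc (maxBumpRow n D p j) p).image fun r => (r, q)) ∪
          ((Finset.Icc (WithTop.untopD j (((Finset.Icc j n).filter
            (fun t => D (maxBumpRow n D p j, t) = false)).min)) q).image
              fun t => (maxBumpRow n D p j, t))
      else
        (((Finset.Icc (maxBumpRow n D p j) p).image fun r => (r, q)) ∪
          ((Finset.Icc (WithTop.untopD j (((Finset.Icc j n).filter
            (fun t => D (maxBumpRow n D p j, t) = false)).min)) q).image
              fun t => (maxBumpRow n D p j, t))) ∪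
          pathAux n D j (fuel-1) (maxBumpRow n D p j,
            WithTop.untopD j (((Finset.Icc j n).filter
              (fun t => D (maxBumpRow n D p j, t) = false)).min))) := by
  obtain ⟨f, rfl⟩ : ∃ f, fuel = f + 1 := ⟨fuel - 1, by omega⟩
  rw [show f+1-1 = f by omega]
  exact pathAux_succ n D j f p q

lemma path_def (n : ℕ) (D : PipeDream) (i j : ℕ) :
    Path n D i j = pathAux n D j i (i, kIdx n D i j) := rfl

lemma path_Gamma {n : ℕ} {D : PipeDream} {i j : ℕ} (ctx : Ctx n D i j)
    (ha : maxBumpRow n D i j = hIdx D i j) :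
    Path n D i j = ((Finset.Icc (hIdx D i j) i).image fun r => (r, kIdx n D i j)) ∪
      ((Finset.Icc j (kIdx n D i j)).image fun t => (hIdx D i j, t)) := by
  have hjn : j ≤ n := by have := ctx.hijn; have := ctx.hi2; omega
  have hFne : ((Finset.Icc j n).filter
      (fun t => D (maxBumpRow n D i j, t) = false)).Nonempty := by
    refine ⟨j, ?_⟩
    rw [Finset.mem_filter, Finset.mem_Icc, ha]
    exact ⟨⟨le_refl _, hjn⟩, ctx.hbumph⟩
  obtain ⟨hmem, hmin⟩ := untop'_min_spec hFne j
  have hq₁ : WithTop.untopD j (((Finset.Icc j n).filter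
      (fun t => D (maxBumpRow n D i j, t) = false)).min) = j := by
    have h1 := (Finset.mem_Icc.mp (Finset.mem_filter.mp hmem).1).1
    have h2 := hmin j (by
      rw [Finset.mem_filter, Finset.mem_Icc, ha]
      exact ⟨⟨le_refl _, hjn⟩, ctx.hbumph⟩)
    omega
  rw [path_def, pathAux_succ' n D j i _ _ (by have := ctx.hi2; omega), if_pos hq₁, hq₁, ha]

lemma kIdx_row_a {n : ℕ} {D : PipeDream} {i j : ℕ} (ctx : Ctx n D i j)
    (ha : hIdx D i j < maxBumpRow n D i j) :
    WithTop.untopD j (((Finset.Icc j n).filter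
        (fun t => D (maxBumpRow n D i j, t) = false)).min) = kIdx n D (maxBumpRow n D i j) j
      ∧ j + 1 ≤ kIdx n D (maxBumpRow n D i j) j
      ∧ kIdx n D (maxBumpRow n D i j) j ≤ kIdx n D i j
      ∧ D (maxBumpRow n D i j, kIdx n D (maxBumpRow n D i j) j) = false := by
  obtain ⟨⟨hmb1, hmb2, qq, hqq1, hqq2, hqq3⟩, hnb⟩ :=
    maxBumpRow_spec (n := n) (D := D) (i := i) (j := j) ctx.hhi ctx.hjk ctx.hbumph
  have hDaj : D (maxBumpRow n D i j, j) = true := ctx.hcolj _ ha hmb2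
  have hqqj : j + 1 ≤ qq := by
    rcases Nat.lt_or_ge j qq with h' | h'
    · omega
    · exfalso
      have : qq = j := by omega
      subst this
      rw [hDaj] at hqq3
      exact Bool.true_eq_false.mp hqq3
  have hqqn : qq ≤ n := by have := ctx.hkn; omega
  have hFeq : (Finset.Icc j n).filter (fun t => D (maxBumpRow n D i j, t) = false)
      = (Finset.Icc (j+1) n).filter (fun t => D (maxBumpRow n D i j, t) = false) := by
    apply Finset.ext
    intro q
    rw [Finset.mem_filter, Finset.mem_filter, Finset.mem_Icc, Finset.mem_Icc]
    constructor
    · rintro ⟨⟨h1, h2⟩, h3⟩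
      refine ⟨⟨?_, h2⟩, h3⟩
      rcases Nat.lt_or_ge j q with h' | h'
      · omega
      · exfalso
        have : q = j := by omega
        subst this
        rw [hDaj] at h3
        exact Bool.true_eq_false.mp h3
    · rintro ⟨⟨h1, h2⟩, h3⟩
      exact ⟨⟨by omega, h2⟩, h3⟩
  obtain ⟨⟨hk1, hk2, hk3⟩, hkmin⟩ := kIdx_spec (n := n) (D := D)
    (i := maxBumpRow n D i j) (j := j) ⟨qq, hqqj, hqqn, hqq3⟩
  have huntop : WithTop.untopD j (((Finset.Icc j n).filter
      (fun t => D (maxBumpRow n D i j, t) = false)).min)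
        = kIdx n D (maxBumpRow n D i j) j := by
    rw [hFeq]
    have hFne2 : ((Finset.Icc (j+1) n).filter
        (fun t => D (maxBumpRow n D i j, t) = false)).Nonempty := by
      refine ⟨qq, ?_⟩
      rw [Finset.mem_filter, Finset.mem_Icc]
      exact ⟨⟨hqqj, hqqn⟩, hqq3⟩
    obtain ⟨m, hm⟩ := Finset.min_of_nonempty hFne2
    rw [kIdx, hm]
    rfl
  exact ⟨huntop, hk1, le_trans (hkmin qq hqqj hqqn hqq3) hqq2, hk3⟩

lemma path_split {n : ℕ} {D : PipeDream} {i j : ℕ} (ctx : Ctx n D i j)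
    (ha : hIdx D i j < maxBumpRow n D i j) :
    Path n D i j = (((Finset.Icc (maxBumpRow n D i j) i).image fun r => (r, kIdx n D i j)) ∪
      ((Finset.Icc (kIdx n D (maxBumpRow n D i j) j) (kIdx n D i j)).image
        fun t => (maxBumpRow n D i j, t))) ∪
      pathAux n D j (i-1) (maxBumpRow n D i j, kIdx n D (maxBumpRow n D i j) j) := by
  obtain ⟨huntop, hk1, hk2, hk3⟩ := kIdx_row_a ctx ha
  rw [path_def, pathAux_succ' n D j i _ _ (by have := ctx.hi2; omega), huntop, if_neg (by omega)]

lemma path_aj_eq {n : ℕ} {D : PipeDream} {i j : ℕ} (ctx : Ctx n D i j)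
    (ha : hIdx D i j < maxBumpRow n D i j) :
    Path n D (maxBumpRow n D i j) j
      = pathAux n D j (i-1) (maxBumpRow n D i j, kIdx n D (maxBumpRow n D i j) j) := by
  obtain ⟨huntop, hk1, hk2, hk3⟩ := kIdx_row_a ctx ha
  have hmb2 : maxBumpRow n D i j < i :=
    (maxBumpRow_spec (n := n) (D := D) (i := i) (j := j) ctx.hhi ctx.hjk ctx.hbumph).1.2.1
  have hmain := path_main n D i j (hIdx D i j) ctx.hj1 ctx.hh1 ctx.hbumph ctx.hcolj
    (maxBumpRow n D i j) (kIdx n D (maxBumpRow n D i j) j) (maxBumpRow n D i j)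
    ha (by omega) (by omega) (by have := ctx.hkn; omega) hk3 (by omega)
  rw [path_def]
  exact (hmain.2 (i-1) (by omega)).symm

lemma path_cover_aj {n : ℕ} {D : PipeDream} {i j : ℕ} (ctx : Ctx n D i j)
    (ha : hIdx D i j < maxBumpRow n D i j) :
    ∀ c, j ≤ c → c ≤ kIdx n D (maxBumpRow n D i j) j →
      ∃ r, r ≤ maxBumpRow n D i j ∧ (r, c) ∈ Path n D i j := by
  intro c hc1 hc2
  obtain ⟨huntop, hk1, hk2, hk3⟩ := kIdx_row_a ctx ha
  have hmb2 : maxBumpRow n D i j < i :=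
    (maxBumpRow_spec (n := n) (D := D) (i := i) (j := j) ctx.hhi ctx.hjk ctx.hbumph).1.2.1
  have hmain := path_main n D i j (hIdx D i j) ctx.hj1 ctx.hh1 ctx.hbumph ctx.hcolj
    (maxBumpRow n D i j) (kIdx n D (maxBumpRow n D i j) j) (i-1)
    ha (by omega) (by omega) (by have := ctx.hkn; omega) hk3 (by omega)
  obtain ⟨r, hr1, hr2⟩ := hmain.1 c hc1 hc2
  refine ⟨r, hr1, ?_⟩
  rw [path_split ctx ha]
  exact Finset.mem_union_right _ hr2

/-! ### Shape membership -/

lemma mem_Shape {n : ℕ} {D : PipeDream} {i j p q : ℕ}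
    (hrect : (p, q) ∈ Rect n D i j) (hbelow : ∃ p' ≤ p, (p', q) ∈ Path n D i j) :
    (p, q) ∈ Shape n D i j := by
  classical
  rw [Shape, Finset.mem_filter]
  exact ⟨hrect, hbelow⟩

lemma Shape_subset_Rect {n : ℕ} {D : PipeDream} {i j : ℕ} :
    Shape n D i j ⊆ Rect n D i j := by
  classical
  intro st hst
  rw [Shape, Finset.mem_filter] at hst
  exact hst.1

lemma mem_Rect {n : ℕ} {D : PipeDream} {i j p q : ℕ} :
    (p, q) ∈ Rect n D i j ↔
      (hIdx D i j ≤ p ∧ p ≤ i ∧ j ≤ q ∧ q ≤ kIdx n D i j) := by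
  rw [Rect, Finset.mem_Icc]
  constructor
  · rintro ⟨⟨h1, h2⟩, h3, h4⟩
    exact ⟨h1, h3, h2, h4⟩
  · rintro ⟨h1, h2, h3, h4⟩
    exact ⟨⟨h1, h3⟩, h2, h4⟩


/-! ### Base case lemmas -/

section Base
variable {n : ℕ} {D : PipeDream} {i j : ℕ}

lemma base_pm (ctx : Ctx n D i j) (hB : minBumpCol n D i j = kIdx n D i j) :
    ∀ c, j < c → c < kIdx n D i j → D (hIdx D i j, c) = true := by
  intro c h1 h2
  exact (minBumpCol_spec ctx.hhi ctx.hjk ctx.hbumpk).2 c (hIdx D i j) h1 (by omega)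
    (le_refl _) (by have := ctx.hhi; omega)

lemma base_pmid (ctx : Ctx n D i j) (hA : maxBumpRow n D i j = hIdx D i j) :
    ∀ r c, hIdx D i j < r → r < i → j ≤ c → c ≤ kIdx n D i j → D (r, c) = true := by
  intro r c h1 h2 h3 h4
  exact (maxBumpRow_spec ctx.hhi ctx.hjk ctx.hbumph).2 r c (by omega) h2 h3 h4

lemma no_double (hst : InStaircase n D)
    (hred : crossCount n D = invCount (PipeDream.perm n D) n) (ctx : Ctx n D i j)
    (hA : maxBumpRow n D i j = hIdx D i j) (hB : minBumpCol n D i j = kIdx n D i j) :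
    D (hIdx D i j, kIdx n D i j) = false := by
  cases hphk : D (hIdx D i j, kIdx n D i j)
  · rfl
  · exfalso
    set E : PipeDream := fun st =>
      if st = ((i : ℕ), (j : ℕ)) ∨ st = ((hIdx D i j : ℕ), (kIdx n D i j : ℕ)) then false
      else D st with hEdef
    have hperm := double_pattern_perm n D E (hIdx D i j) i j (kIdx n D i j)
      ctx.hh1 ctx.hhi (by have := ctx.hijn; have := ctx.hj1; omega) ctx.hj1 ctx.hjk ctx.hkn
      ctx.hbumph hphk (base_pm ctx hB) (base_pmid ctx hA)
      (fun c h1 h2 => by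
        rcases Nat.lt_or_ge j c with h' | h'
        · exact ctx.hrowi c h' h2
        · have : c = j := by omega
          subst this
          exact ctx.hij)
      ctx.hbumpk (fun st => rfl)
    have hinv := invCount_sp_le n (word n E)
    have hpE : PipeDream.perm n E = sp (word n E) := rfl
    rw [← hpE, hperm.1] at hinv
    have hlen := hperm.2
    have hcc : crossCount n D = (word n D).length := rfl
    omega

lemma base_ladderMovable (ctx : Ctx n D i j)
    (hA : maxBumpRow n D i j = hIdx D i j) (hB : minBumpCol n D i j = kIdx n D i j)
    (hphk : D (hIdx D i j, kIdx n D i j) = false) :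
    LadderMovable n D i j := by
  refine ⟨⟨ctx.hij, hIdx D i j, ctx.hh1, ctx.hhi, ctx.hbumph⟩, ?_⟩
  intro p q hpq
  obtain ⟨h1, h2, h3, h4⟩ := mem_Rect.mp hpq
  constructor
  · intro hbump
    rcases Nat.lt_or_ge (hIdx D i j) p with hp | hp
    · rcases Nat.lt_or_ge p i with hpi | hpi
      · exfalso
        rw [base_pmid ctx hA p q hp hpi h3 h4] at hbump
        exact Bool.true_eq_false.mp hbump
      · have hpi' : p = i := by omega
        rcases Nat.lt_or_ge q (kIdx n D i j) with hq | hq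
        · exfalso
          rcases Nat.lt_or_ge j q with hq' | hq'
          · rw [hpi', ctx.hrowi q hq' hq] at hbump
            exact Bool.true_eq_false.mp hbump
          · have hqj : q = j := by omega
            rw [hpi', hqj, ctx.hij] at hbump
            exact Bool.true_eq_false.mp hbump
        · right; right
          rw [Prod.mk.injEq]
          exact ⟨hpi', by omega⟩
    · have hp' : p = hIdx D i j := by omega
      rcases Nat.lt_or_ge j q with hq | hq
      · rcases Nat.lt_or_ge q (kIdx n D i j) with hq' | hq'
        · exfalso
          rw [hp', base_pm ctx hB q hq hq'] at hbump
          exact Bool.true_eq_false.mp hbump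
        · right; left
          rw [Prod.mk.injEq]
          exact ⟨hp', by omega⟩
      · left
        rw [Prod.mk.injEq]
        exact ⟨hp', by omega⟩
  · intro hcor
    rcases hcor with hc | hc | hc
    · rw [Prod.mk.injEq] at hc
      rw [hc.1, hc.2]
      exact ctx.hbumph
    · rw [Prod.mk.injEq] at hc
      rw [hc.1, hc.2]
      exact hphk
    · rw [Prod.mk.injEq] at hc
      rw [hc.1, hc.2]
      exact ctx.hbumpk

lemma ladder_preserves (hst : InStaircase n D) (ctx : Ctx n D i j)
    (hA : maxBumpRow n D i j = hIdx D i j) (hB : minBumpCol n D i j = kIdx n D i j)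
    (hphk : D (hIdx D i j, kIdx n D i j) = false) :
    PipeDream.perm n (ladderMove n D i j) = PipeDream.perm n D ∧
    crossCount n (ladderMove n D i j) = crossCount n D ∧
    InStaircase n (ladderMove n D i j) := by
  have hperm := ladder_pattern_perm n D (ladderMove n D i j) (hIdx D i j) i j (kIdx n D i j)
    ctx.hh1 ctx.hhi (by have := ctx.hijn; have := ctx.hj1; omega) ctx.hj1 ctx.hjk ctx.hkn
    ctx.hbumph hphk (base_pm ctx hB) (base_pmid ctx hA)
    (fun c h1 h2 => by
      rcases Nat.lt_or_ge j c with h' | h'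
      · exact ctx.hrowi c h' h2
      · have : c = j := by omega
        subst this
        exact ctx.hij)
    ctx.hbumpk (fun st => rfl)
  refine ⟨hperm.1, hperm.2, ?_⟩
  intro r c hrc
  by_cases hc1 : ((r : ℕ), (c : ℕ)) = ((i : ℕ), (j : ℕ))
  · exfalso
    rw [ladderMove] at hrc
    rw [if_pos hc1] at hrc
    exact Bool.false_ne_true hrc
  · by_cases hc2 : ((r : ℕ), (c : ℕ)) = (hIdx D i j, kIdx n D i j)
    · rw [Prod.mk.injEq] at hc2
      rw [hc2.1, hc2.2]
      have := ctx.hkstair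
      have := ctx.hhi
      have := ctx.hh1
      have := ctx.hjk
      have := ctx.hj1
      refine ⟨by omega, by omega, by omega⟩
    · rw [ladderMove] at hrc
      rw [if_neg hc1, if_neg hc2] at hrc
      exact hst r c hrc

end Base


/-! ### Rect cardinality -/

lemma Rect_card (n : ℕ) (D : PipeDream) (i j : ℕ) :
    (Rect n D i j).card = (i + 1 - hIdx D i j) * (kIdx n D i j + 1 - j) := by
  rw [Rect, show (Finset.Icc (hIdx D i j, j) (i, kIdx n D i j) : Finset (ℕ × ℕ))
      = Finset.Icc (hIdx D i j) i ×ˢ Finset.Icc j (kIdx n D i j) from rfl,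
    Finset.card_product, Nat.card_Icc, Nat.card_Icc]

lemma moveAux_succ (n fuel : ℕ) (D : PipeDream) (i j : ℕ) :
    moveAux n (fuel+1) D i j =
      if maxBumpRow n D i j = hIdx D i j ∧ minBumpCol n D i j = kIdx n D i j then
        ladderMove n D i j
      else if hIdx D i j < maxBumpRow n D i j then
        moveAux n fuel (moveAux n fuel D (maxBumpRow n D i j) j) i j
      else
        moveAux n fuel (moveAux n fuel D i (minBumpCol n D i j)) i j := rfl

/-! ### The master induction -/

set_option maxHeartbeats 1600000 in
lemma master (n : ℕ) : ∀ (fuel : ℕ) (D : PipeDream) (i j : ℕ),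
    InStaircase n D → crossCount n D = invCount (PipeDream.perm n D) n → Movable D i j →
    (Rect n D i j).card ≤ fuel →
    (∀ st, st ∉ Shape n D i j → moveAux n fuel D i j st = D st) ∧
    ladderLE n D (moveAux n fuel D i j) ∧
    moveAux n fuel D i j (i, j) = false ∧
    InStaircase n (moveAux n fuel D i j) ∧
    crossCount n (moveAux n fuel D i j) = crossCount n D ∧
    PipeDream.perm n (moveAux n fuel D i j) = PipeDream.perm n D := by
  intro fuel
  induction fuel with
  | zero =>
      intro D i j hst hred hmov hcard
      exfalso
      have ctx := mkCtx hst hmov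
      have : (i, j) ∈ Rect n D i j :=
        mem_Rect.mpr ⟨le_of_lt ctx.hhi, le_refl _, le_refl _, le_of_lt ctx.hjk⟩
      have := Finset.card_pos.mpr ⟨(i, j), this⟩
      omega
  | succ fuel IH =>
    intro D i j hst hred hmov hcard
    have ctx := mkCtx hst hmov
    by_cases hbase : maxBumpRow n D i j = hIdx D i j ∧ minBumpCol n D i j = kIdx n D i j
    · -- base case : a single ladder move
      obtain ⟨hA, hB⟩ := hbase
      have hM : moveAux n (fuel+1) D i j = ladderMove n D i j := by
        rw [moveAux_succ, if_pos ⟨hA, hB⟩]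
      have hphk := no_double hst hred ctx hA hB
      have hLM := base_ladderMovable ctx hA hB hphk
      have hpres := ladder_preserves hst ctx hA hB hphk
      have hShape_ij : ((i : ℕ), (j : ℕ)) ∈ Shape n D i j := by
        apply mem_Shape (mem_Rect.mpr ⟨le_of_lt ctx.hhi, le_refl _, le_refl _, le_of_lt ctx.hjk⟩)
        refine ⟨hIdx D i j, le_of_lt ctx.hhi, ?_⟩
        rw [path_Gamma ctx hA]
        apply Finset.mem_union_right
        exact Finset.mem_image_of_mem _ (Finset.mem_Icc.mpr ⟨le_refl _, le_of_lt ctx.hjk⟩)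
      have hShape_hk : ((hIdx D i j : ℕ), (kIdx n D i j : ℕ)) ∈ Shape n D i j := by
        apply mem_Shape (mem_Rect.mpr ⟨le_refl _, le_of_lt ctx.hhi, le_of_lt ctx.hjk, le_refl _⟩)
        refine ⟨hIdx D i j, le_refl _, ?_⟩
        rw [path_Gamma ctx hA]
        apply Finset.mem_union_right
        exact Finset.mem_image_of_mem _ (Finset.mem_Icc.mpr ⟨le_of_lt ctx.hjk, le_refl _⟩)
      rw [hM]
      refine ⟨?_, ?_, ?_, hpres.2.2, hpres.2.1, hpres.1⟩
      · intro st hstS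
        have h1 : st ≠ ((i : ℕ), (j : ℕ)) := fun hc => hstS (hc ▸ hShape_ij)
        have h2 : st ≠ ((hIdx D i j : ℕ), (kIdx n D i j : ℕ)) := fun hc => hstS (hc ▸ hShape_hk)
        show (if st = ((i : ℕ), (j : ℕ)) then false
          else if st = (hIdx D i j, kIdx n D i j) then true else D st) = D st
        rw [if_neg h1, if_neg h2]
      · exact Relation.ReflTransGen.single ⟨i, j, hLM, rfl⟩
      · show (if ((i : ℕ), (j : ℕ)) = ((i : ℕ), (j : ℕ)) then false
          else if ((i : ℕ), (j : ℕ)) = (hIdx D i j, kIdx n D i j) then true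
          else D (i, j)) = false
        rw [if_pos rfl]
    · by_cases hii : hIdx D i j < maxBumpRow n D i j
      · -- case (ii) : recurse through row a
        have hM : moveAux n (fuel+1) D i j
            = moveAux n fuel (moveAux n fuel D (maxBumpRow n D i j) j) i j := by
          rw [moveAux_succ, if_neg hbase, if_pos hii]
        obtain ⟨⟨ha1, ha2, qq, hqq1, hqq2, hqq3⟩, hnb⟩ :=
          maxBumpRow_spec (n := n) (D := D) (i := i) (j := j) ctx.hhi ctx.hjk ctx.hbumph
        obtain ⟨huntop, hka1, hka2, hka3⟩ := kIdx_row_a ctx hii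
        have hDaj : D (maxBumpRow n D i j, j) = true := ctx.hcolj _ hii ha2
        have hmova : Movable D (maxBumpRow n D i j) j :=
          ⟨hDaj, hIdx D i j, ctx.hh1, hii, ctx.hbumph⟩
        have hIdxa : hIdx D (maxBumpRow n D i j) j = hIdx D i j :=
          hIdx_eq ctx.hh1 hii ctx.hbumph (fun p h1 h2 => ctx.hcolj p h1 (by omega))
        have hcard_ij : (Rect n D i j).card = (i + 1 - hIdx D i j) * (kIdx n D i j + 1 - j) :=
          Rect_card n D i j
        have hcard_a : (Rect n D (maxBumpRow n D i j) j).card ≤ fuel := by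
          have hcard' := hcard
          rw [Rect_card n D i j] at hcard'
          rw [Rect_card, hIdxa]
          have hle : (maxBumpRow n D i j + 1 - hIdx D i j) * (kIdx n D (maxBumpRow n D i j) j + 1 - j)
              ≤ (maxBumpRow n D i j + 1 - hIdx D i j) * (kIdx n D i j + 1 - j) :=
            Nat.mul_le_mul_left _ (by omega)
          have hlt : (maxBumpRow n D i j + 1 - hIdx D i j) * (kIdx n D i j + 1 - j)
              < (i + 1 - hIdx D i j) * (kIdx n D i j + 1 - j) :=
            Nat.mul_lt_mul_of_lt_of_le (by omega) (le_refl _) (by have := ctx.hjk; omega)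
          omega
        obtain ⟨hE1, hE2, hE3, hE4, hE5, hE6⟩ := IH D (maxBumpRow n D i j) j hst hred hmova hcard_a
        have hEout : ∀ p q, ¬(hIdx D i j ≤ p ∧ p ≤ maxBumpRow n D i j ∧ j ≤ q
            ∧ q ≤ kIdx n D (maxBumpRow n D i j) j) →
            moveAux n fuel D (maxBumpRow n D i j) j (p, q) = D (p, q) := by
          intro p q hpq
          apply hE1
          intro hS
          have hb := mem_Rect.mp (Shape_subset_Rect hS)
          rw [hIdxa] at hb
          exact hpq hb
        have hIdxE : hIdx (moveAux n fuel D (maxBumpRow n D i j) j) i j = maxBumpRow n D i j := by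
          apply hIdx_eq (by omega) ha2 hE3
          intro p h1 h2
          rw [hEout p j (by omega)]
          exact ctx.hcolj p (by omega) h2
        have hkE : kIdx n (moveAux n fuel D (maxBumpRow n D i j) j) i j = kIdx n D i j := by
          apply kIdx_eq (by have := ctx.hjk; omega) ctx.hkn
          · rw [hEout i (kIdx n D i j) (by omega)]
            exact ctx.hbumpk
          · intro q h1 h2
            rw [hEout i q (by omega)]
            exact ctx.hrowi q h1 h2
        have hmovE : Movable (moveAux n fuel D (maxBumpRow n D i j) j) i j := by
          refine ⟨?_, maxBumpRow n D i j, by omega, ha2, hE3⟩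
          rw [hEout i j (by omega)]
          exact ctx.hij
        have hredE : crossCount n (moveAux n fuel D (maxBumpRow n D i j) j)
            = invCount (PipeDream.perm n (moveAux n fuel D (maxBumpRow n D i j) j)) n := by
          rw [hE5, hE6]; exact hred
        have hcard_E : (Rect n (moveAux n fuel D (maxBumpRow n D i j) j) i j).card ≤ fuel := by
          have hcard' := hcard
          rw [Rect_card n D i j] at hcard'
          rw [Rect_card, hIdxE, hkE]
          have hlt : (i + 1 - maxBumpRow n D i j) * (kIdx n D i j + 1 - j)
              < (i + 1 - hIdx D i j) * (kIdx n D i j + 1 - j) :=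
            Nat.mul_lt_mul_of_lt_of_le (by omega) (le_refl _) (by have := ctx.hjk; omega)
          omega
        obtain ⟨hM1, hM2, hM3, hM4, hM5, hM6⟩ :=
          IH (moveAux n fuel D (maxBumpRow n D i j) j) i j hE4 hredE hmovE hcard_E
        rw [hM]
        refine ⟨?_, Relation.ReflTransGen.trans hE2 hM2, hM3, hM4, by rw [hM5, hE5],
          by rw [hM6, hE6]⟩
        intro st hstS
        obtain ⟨p, q⟩ := st
        have hsubE : (p, q) ∈ Shape n (moveAux n fuel D (maxBumpRow n D i j) j) i j →
            (p, q) ∈ Shape n D i j := by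
          intro hS
          obtain ⟨hb1, hb2, hb3, hb4⟩ := mem_Rect.mp (Shape_subset_Rect hS)
          rw [hIdxE] at hb1
          rw [hkE] at hb4
          apply mem_Shape (mem_Rect.mpr ⟨by omega, hb2, hb3, hb4⟩)
          rcases Nat.lt_or_ge q (kIdx n D (maxBumpRow n D i j) j) with hq | hq
          · obtain ⟨r, hr1, hr2⟩ := path_cover_aj ctx hii q hb3 (by omega)
            exact ⟨r, by omega, hr2⟩
          · refine ⟨maxBumpRow n D i j, by omega, ?_⟩
            rw [path_split ctx hii]
            apply Finset.mem_union_left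
            apply Finset.mem_union_right
            exact Finset.mem_image_of_mem _ (Finset.mem_Icc.mpr ⟨hq, hb4⟩)
        have hsubA : (p, q) ∈ Shape n D (maxBumpRow n D i j) j → (p, q) ∈ Shape n D i j := by
          classical
          intro hS
          rw [Shape, Finset.mem_filter] at hS
          obtain ⟨hrect, p', hp'1, hp'2⟩ := hS
          obtain ⟨hb1, hb2, hb3, hb4⟩ := mem_Rect.mp hrect
          rw [hIdxa] at hb1
          apply mem_Shape (mem_Rect.mpr ⟨hb1, by omega, hb3, by omega⟩)
          refine ⟨p', hp'1, ?_⟩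
          rw [path_split ctx hii]
          apply Finset.mem_union_right
          rw [← path_aj_eq ctx hii]
          exact hp'2
        rw [hM1 (p, q) (fun hS => hstS (hsubE hS)), hE1 (p, q) (fun hS => hstS (hsubA hS))]
      · -- case (iii) : recurse through column b
        have hM : moveAux n (fuel+1) D i j
            = moveAux n fuel (moveAux n fuel D i (minBumpCol n D i j)) i j := by
          rw [moveAux_succ, if_neg hbase, if_neg hii]
        have haeq : maxBumpRow n D i j = hIdx D i j := by
          have := (maxBumpRow_spec (n := n) (D := D) (i := i) (j := j)
            ctx.hhi ctx.hjk ctx.hbumph).1.1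
          omega
        have hBne : minBumpCol n D i j ≠ kIdx n D i j := fun hBeq => hbase ⟨haeq, hBeq⟩
        obtain ⟨⟨hb1, hb2, pb, hpb1, hpb2, hpb3⟩, hnbc⟩ :=
          minBumpCol_spec (n := n) (D := D) (i := i) (j := j) ctx.hhi ctx.hjk ctx.hbumpk
        have hbk : minBumpCol n D i j < kIdx n D i j := lt_of_le_of_ne hb2 hBne
        have hnb := (maxBumpRow_spec (n := n) (D := D) (i := i) (j := j)
          ctx.hhi ctx.hjk ctx.hbumph).2
        rw [haeq] at hnb
        have hDib : D (i, minBumpCol n D i j) = true := ctx.hrowi _ (by omega) hbk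
        have hpbh : pb = hIdx D i j := by
          rcases Nat.lt_or_ge pb i with hpi | hpi
          · rcases Nat.lt_or_ge (hIdx D i j) pb with hph | hph
            · exfalso
              rw [hnb pb (minBumpCol n D i j) hph hpi (by omega) (by omega)] at hpb3
              exact Bool.true_eq_false.mp hpb3
            · omega
          · exfalso
            have : pb = i := by omega
            rw [this, hDib] at hpb3
            exact Bool.true_eq_false.mp hpb3
        have hDhb : D (hIdx D i j, minBumpCol n D i j) = false := by
          rw [← hpbh]; exact hpb3
        have hmovb : Movable D i (minBumpCol n D i j) :=
          ⟨hDib, hIdx D i j, ctx.hh1, ctx.hhi, hDhb⟩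
        have hIdxb : hIdx D i (minBumpCol n D i j) = hIdx D i j := by
          apply hIdx_eq ctx.hh1 ctx.hhi hDhb
          intro p h1 h2
          exact hnb p (minBumpCol n D i j) h1 h2 (by omega) (by omega)
        have hkb : kIdx n D i (minBumpCol n D i j) = kIdx n D i j := by
          apply kIdx_eq (by omega) ctx.hkn ctx.hbumpk
          intro q h1 h2
          exact ctx.hrowi q (by omega) h2
        have hcard_b : (Rect n D i (minBumpCol n D i j)).card ≤ fuel := by
          have hcard' := hcard
          rw [Rect_card n D i j] at hcard'
          rw [Rect_card, hIdxb, hkb]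
          have hlt : (i + 1 - hIdx D i j) * (kIdx n D i j + 1 - minBumpCol n D i j)
              < (i + 1 - hIdx D i j) * (kIdx n D i j + 1 - j) :=
            Nat.mul_lt_mul_of_le_of_lt (le_refl _) (by omega) (by have := ctx.hhi; omega)
          omega
        obtain ⟨hE1, hE2, hE3, hE4, hE5, hE6⟩ := IH D i (minBumpCol n D i j) hst hred hmovb hcard_b
        have hEout : ∀ p q, ¬(hIdx D i j ≤ p ∧ p ≤ i ∧ minBumpCol n D i j ≤ q
            ∧ q ≤ kIdx n D i j) →
            moveAux n fuel D i (minBumpCol n D i j) (p, q) = D (p, q) := by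
          intro p q hpq
          apply hE1
          intro hS
          have hb := mem_Rect.mp (Shape_subset_Rect hS)
          rw [hIdxb, hkb] at hb
          exact hpq hb
        have hIdxE : hIdx (moveAux n fuel D i (minBumpCol n D i j)) i j = hIdx D i j := by
          symm
          apply hIdx_congr
          intro p
          exact (hEout p j (by omega)).symm
        have hkE : kIdx n (moveAux n fuel D i (minBumpCol n D i j)) i j = minBumpCol n D i j := by
          apply kIdx_eq (by omega) (by have := ctx.hkn; omega) hE3
          intro q h1 h2
          rw [hEout i q (by omega)]
          exact ctx.hrowi q h1 (by omega)
        have hmovE : Movable (moveAux n fuel D i (minBumpCol n D i j)) i j := by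
          refine ⟨?_, hIdx D i j, ctx.hh1, ctx.hhi, ?_⟩
          · rw [hEout i j (by omega)]
            exact ctx.hij
          · rw [hEout (hIdx D i j) j (by omega)]
            exact ctx.hbumph
        have hredE : crossCount n (moveAux n fuel D i (minBumpCol n D i j))
            = invCount (PipeDream.perm n (moveAux n fuel D i (minBumpCol n D i j))) n := by
          rw [hE5, hE6]; exact hred
        have hcard_E : (Rect n (moveAux n fuel D i (minBumpCol n D i j)) i j).card ≤ fuel := by
          have hcard' := hcard
          rw [Rect_card n D i j] at hcard'
          rw [Rect_card, hIdxE, hkE]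
          have hlt : (i + 1 - hIdx D i j) * (minBumpCol n D i j + 1 - j)
              < (i + 1 - hIdx D i j) * (kIdx n D i j + 1 - j) :=
            Nat.mul_lt_mul_of_le_of_lt (le_refl _) (by omega) (by have := ctx.hhi; omega)
          omega
        obtain ⟨hM1, hM2, hM3, hM4, hM5, hM6⟩ :=
          IH (moveAux n fuel D i (minBumpCol n D i j)) i j hE4 hredE hmovE hcard_E
        rw [hM]
        refine ⟨?_, Relation.ReflTransGen.trans hE2 hM2, hM3, hM4, by rw [hM5, hE5],
          by rw [hM6, hE6]⟩
        intro st hstS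
        obtain ⟨p, q⟩ := st
        have hfull : (p, q) ∈ Rect n D i j → (p, q) ∈ Shape n D i j := by
          intro hr
          obtain ⟨hr1, hr2, hr3, hr4⟩ := mem_Rect.mp hr
          apply mem_Shape hr
          refine ⟨hIdx D i j, hr1, ?_⟩
          rw [path_Gamma ctx haeq]
          apply Finset.mem_union_right
          exact Finset.mem_image_of_mem _ (Finset.mem_Icc.mpr ⟨hr3, hr4⟩)
        have hstR : (p, q) ∉ Rect n D i j := fun hr => hstS (hfull hr)
        have hnotE : (p, q) ∉ Shape n (moveAux n fuel D i (minBumpCol n D i j)) i j := by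
          intro hS
          obtain ⟨hc1, hc2, hc3, hc4⟩ := mem_Rect.mp (Shape_subset_Rect hS)
          rw [hIdxE] at hc1
          rw [hkE] at hc4
          exact hstR (mem_Rect.mpr ⟨hc1, hc2, hc3, by omega⟩)
        have hnotB : (p, q) ∉ Shape n D i (minBumpCol n D i j) := by
          intro hS
          obtain ⟨hc1, hc2, hc3, hc4⟩ := mem_Rect.mp (Shape_subset_Rect hS)
          rw [hIdxb] at hc1
          rw [hkb] at hc4
          exact hstR (mem_Rect.mpr ⟨hc1, hc2, by omega, hc4⟩)
        rw [hM1 (p, q) hnotE, hE1 (p, q) hnotB]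

end PDProof

open PipeDream in
/-- M_{ij} only changes tiles inside Shape_{ij}(D), and
M_{ij}(D) > D in the ladder-move order. -/
theorem stmt18 (n : ℕ) (w : Equiv.Perm ℕ) (D : PipeDream) (hD : D ∈ RPD n w)
    (i j : ℕ) (hmov : Movable D i j) :
    (∀ st : ℕ × ℕ, st ∉ Shape n D i j → move n D i j st = D st) ∧
    ladderLE n D (move n D i j) ∧ move n D i j ≠ D := by
  obtain ⟨hst, hperm, hcc⟩ := hD
  have hred : crossCount n D = PipeDream.invCount (PipeDream.perm n D) n := by
    rw [hperm]; exact hcc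
  have ctx := PDProof.mkCtx hst hmov
  have hcard : (Rect n D i j).card ≤ (n+2)^(n+2) := by
    rw [PDProof.Rect_card]
    have h1 : i + 1 - PipeDream.hIdx D i j ≤ n := by
      have := ctx.hh1; have := ctx.hijn; have := ctx.hj1; omega
    have h2 : kIdx n D i j + 1 - j ≤ n := by
      have := ctx.hkn; have := ctx.hj1; omega
    calc (i + 1 - hIdx D i j) * (kIdx n D i j + 1 - j) ≤ n * n := Nat.mul_le_mul h1 h2
      _ ≤ (n+2) * (n+2) := Nat.mul_le_mul (by omega) (by omega)
      _ = (n+2)^2 := by ring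
      _ ≤ (n+2)^(n+2) := Nat.pow_le_pow_right (by omega) (by omega)
  obtain ⟨h1, h2, h3, _, _, _⟩ := PDProof.master n ((n+2)^(n+2)) D i j hst hred hmov hcard
  have hmm : PipeDream.move n D i j = moveAux n ((n+2)^(n+2)) D i j := rfl
  refine ⟨?_, ?_, ?_⟩
  · intro st hstS
    rw [hmm]
    exact h1 st hstS
  · rw [hmm]
    exact h2
  · intro hMD
    rw [hmm] at hMD
    rw [hMD] at h3
    rw [hmov.1] at h3
    exact Bool.true_eq_false.mp h3
end
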